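/- arXiv:2411.13985 — 7 statements merged into one kernel-verified Lean document; each statement's English description precedes it below -/
import Mathlib

section
/- Every hypergraph of rank at most 2 has a strict segment representation. -/
set_option maxRecDepth 8000

abbrev Pt : Type := ℝ × ℝ

def IsLine (L : Set Pt) : Prop :=
  ∃ a b : Pt, a ≠ b ∧ L = (affineSpan ℝ {a, b} : Set Pt)

def IsSegment (S : Set Pt) : Prop :=
  ∃ a b : Pt, a ≠ b ∧ S = segment ℝ a b

structure FinHypergraph (ι : Type) where
  V : Finset ι
  E : Finset (Finset ι)
  edge_nonempty : ∀ e ∈ E, e.Nonempty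
  edge_subset : ∀ e ∈ E, e ⊆ V

structure LineRep {ι : Type} (H : FinHypergraph ι) where
  α : ι → Pt
  β : Finset ι → Set Pt
  α_inj : Set.InjOn α ↑H.V
  β_inj : Set.InjOn β ↑H.E
  β_isLine : ∀ e ∈ H.E, IsLine (β e)
  incidence : ∀ v ∈ H.V, ∀ e ∈ H.E, (v ∈ e ↔ α v ∈ β e)

structure SegmentRep {ι : Type} (H : FinHypergraph ι) where
  α : ι → Pt
  β : Finset ι → Set Pt
  α_inj : Set.InjOn α ↑H.V
  β_inj : Set.InjOn β ↑H.E
  β_isSegment : ∀ e ∈ H.E, IsSegment (β e)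
  incidence : ∀ v ∈ H.V, ∀ e ∈ H.E, (v ∈ e ↔ α v ∈ β e)

def SegmentRep.Strict {ι : Type} {H : FinHypergraph ι} (R : SegmentRep H) : Prop :=
  ∀ e ∈ H.E, ∀ e' ∈ H.E, e ≠ e' → (R.β e ∩ R.β e').Subsingleton

def LineRep.CrossingFree {ι : Type} {H : FinHypergraph ι} (R : LineRep H) : Prop :=
  ∀ e ∈ H.E, ∀ e' ∈ H.E, ((R.β e ∩ R.β e').Nonempty ↔ ∃ v, v ∈ e ∧ v ∈ e')

def SegmentRep.CrossingFree {ι : Type} {H : FinHypergraph ι} (R : SegmentRep H) : Prop :=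
  ∀ e ∈ H.E, ∀ e' ∈ H.E, ((R.β e ∩ R.β e').Nonempty ↔ ∃ v, v ∈ e ∧ v ∈ e')

/-!
Put the vertices on the parabola `y = x²` at distinct abscissae. A two-element edge `{a, b}`
becomes the chord between its endpoints, which lies on the line `y = (a + b) x - a b`; a
one-element edge `{a}` becomes a vertical segment starting at its vertex. Each such line meets the
parabola only at the vertices of its edge, which gives the incidences, and by Vieta distinct edges
have distinct supporting lines, which gives strictness.
-/

open Set

noncomputable section

def verticalLine (c : ℝ) : Set Pt := {p | p.1 = c}

def graphLine (m k : ℝ) : Set Pt := {p | p.2 = m * p.1 + k}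

lemma convex_verticalLine (c : ℝ) : Convex ℝ (verticalLine c) := by
  intro x hx y hy u v _ _ huv
  simp only [verticalLine, mem_ofPred_eq, Prod.fst_add, Prod.smul_fst, smul_eq_mul] at *
  linear_combination u * hx + v * hy + c * huv

lemma convex_graphLine (m k : ℝ) : Convex ℝ (graphLine m k) := by
  intro x hx y hy u v _ _ huv
  simp only [graphLine, mem_ofPred_eq, Prod.fst_add, Prod.snd_add, Prod.smul_fst,
    Prod.smul_snd, smul_eq_mul] at *
  linear_combination u * hx + v * hy + k * huv

lemma verticalLine_inter_graphLine_subsingleton (c m k : ℝ) :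
    (verticalLine c ∩ graphLine m k).Subsingleton := by
  rintro p ⟨hp1, hp2⟩ q ⟨hq1, hq2⟩
  simp only [verticalLine, graphLine, mem_ofPred_eq] at *
  exact Prod.ext (hp1.trans hq1.symm) (by rw [hp2, hq2, hp1, hq1])

lemma graphLine_inter_subsingleton {m k m' k' : ℝ} (h : (m, k) ≠ (m', k')) :
    (graphLine m k ∩ graphLine m' k').Subsingleton := by
  rintro p ⟨hp, hp'⟩ q ⟨hq, hq'⟩
  simp only [graphLine, mem_ofPred_eq] at *
  by_cases hm : m = m'
  · exact absurd (Prod.ext hm (by linear_combination hp' - hp - p.1 * hm)) h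
  · have h1 : p.1 = q.1 := by
      have : (m - m') * (p.1 - q.1) = 0 := by linear_combination hp' - hp - hq' + hq
      exact sub_eq_zero.mp ((mul_eq_zero.mp this).resolve_left (sub_ne_zero.mpr hm))
    exact Prod.ext h1 (by rw [hp, hq, h1])

lemma sym2_eq_of_add_eq_of_mul_eq {a b c d : ℝ} (hs : a + b = c + d) (hp : a * b = c * d) :
    s(a, b) = s(c, d) := by
  have h : (a - c) * (a - d) = 0 := by linear_combination a * hs - hp
  rcases mul_eq_zero.mp h with h | h
  · exact Sym2.eq_iff.mpr (Or.inl ⟨by linarith, by linarith⟩)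
  · exact Sym2.eq_iff.mpr (Or.inr ⟨by linarith, by linarith⟩)

def parabolaPt (x : ℝ) : Pt := (x, x ^ 2)

/-- `a = b` encodes the one-element edge `{a}`. -/
def edgeSegment (a b : ℝ) : Set Pt :=
  if a = b then segment ℝ (parabolaPt a) (parabolaPt a + (0, 1))
  else segment ℝ (parabolaPt a) (parabolaPt b)

def supportLine (a b : ℝ) : Set Pt :=
  if a = b then verticalLine a else graphLine (a + b) (-(a * b))

lemma edgeSegment_subset_supportLine (a b : ℝ) : edgeSegment a b ⊆ supportLine a b := by
  unfold edgeSegment supportLine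
  split_ifs
  · exact (convex_verticalLine a).segment_subset (by simp [verticalLine, parabolaPt])
      (by simp [verticalLine, parabolaPt])
  · exact (convex_graphLine _ _).segment_subset (by simp [graphLine, parabolaPt]; ring)
      (by simp [graphLine, parabolaPt]; ring)

lemma parabolaPt_mem_edgeSegment_iff {a b x : ℝ} :
    parabolaPt x ∈ edgeSegment a b ↔ x = a ∨ x = b := by
  constructor
  · intro hx
    have hline := edgeSegment_subset_supportLine a b hx
    unfold supportLine at hline
    split_ifs at hline
    · exact Or.inl hline
    · have : (x - a) * (x - b) = 0 := by
        simp only [graphLine, parabolaPt, mem_ofPred_eq] at hline; linear_combination hline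
      simpa only [mul_eq_zero, sub_eq_zero] using this
  · unfold edgeSegment
    rintro (rfl | rfl) <;> split_ifs with hab
    · exact left_mem_segment ℝ _ _
    · exact left_mem_segment ℝ _ _
    · exact hab ▸ left_mem_segment ℝ _ _
    · exact right_mem_segment ℝ _ _

lemma isSegment_edgeSegment (a b : ℝ) : IsSegment (edgeSegment a b) := by
  unfold edgeSegment
  split_ifs with hab
  · exact ⟨_, _, by simp [parabolaPt, Prod.ext_iff], rfl⟩
  · exact ⟨_, _, fun h => hab (congrArg Prod.fst h), rfl⟩

lemma supportLine_inter_subsingleton {a b c d : ℝ} (h : s(a, b) ≠ s(c, d)) :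
    (supportLine a b ∩ supportLine c d).Subsingleton := by
  unfold supportLine
  split_ifs with hab hcd hcd
  · subst hab hcd
    rintro p ⟨hp, hq⟩
    simp only [verticalLine, mem_ofPred_eq] at hp hq
    exact absurd (by rw [← hp, ← hq]) h
  · exact verticalLine_inter_graphLine_subsingleton _ _ _
  · exact inter_comm _ _ ▸ verticalLine_inter_graphLine_subsingleton _ _ _
  · refine graphLine_inter_subsingleton fun hmk => h ?_
    simp only [Prod.mk.injEq, neg_inj] at hmk
    exact sym2_eq_of_add_eq_of_mul_eq hmk.1 hmk.2

lemma edgeSegment_inter_subsingleton {a b c d : ℝ} (h : s(a, b) ≠ s(c, d)) :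
    (edgeSegment a b ∩ edgeSegment c d).Subsingleton :=
  (supportLine_inter_subsingleton h).anti
    (inter_subset_inter (edgeSegment_subset_supportLine a b) (edgeSegment_subset_supportLine c d))

lemma FinHypergraph.injOn_of_incidence {ι : Type} {H : FinHypergraph ι} {α : ι → Pt}
    {β : Finset ι → Set Pt} (h : ∀ v ∈ H.V, ∀ e ∈ H.E, (v ∈ e ↔ α v ∈ β e)) : InjOn β H.E := by
  intro e he e' he' heq
  ext v
  by_cases hv : v ∈ H.V
  · rw [h v hv e he, h v hv e' he', heq]
  · exact iff_of_false (fun hve => hv (H.edge_subset e he hve))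
      (fun hve => hv (H.edge_subset e' he' hve))

variable {ι : Type} [DecidableEq ι]

lemma exists_eq_pair_of_card_le_two {e : Finset ι} (hne : e.Nonempty) (h : e.card ≤ 2) :
    ∃ a b, e = {a, b} := by
  obtain h1 | h2 : e.card = 1 ∨ e.card = 2 := by have := hne.card_pos; omega
  · obtain ⟨a, rfl⟩ := Finset.card_eq_one.mp h1
    exact ⟨a, a, (Finset.pair_eq_singleton a).symm⟩
  · obtain ⟨a, b, -, rfl⟩ := Finset.card_eq_two.mp h2
    exact ⟨a, b, rfl⟩

lemma pair_eq_pair_of_injOn {β : Type*} {s : Finset ι} {t : ι → β} (ht : InjOn t s)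
    {a b c d : ι} (hab : {a, b} ⊆ s) (hcd : {c, d} ⊆ s) (h : s(t a, t b) = s(t c, t d)) :
    ({a, b} : Finset ι) = {c, d} := by
  have ha := hab (by simp : a ∈ _)
  have hb := hab (by simp : b ∈ _)
  have hc := hcd (by simp : c ∈ _)
  have hd := hcd (by simp : d ∈ _)
  rcases Sym2.eq_iff.mp h with ⟨hac, hbd⟩ | ⟨had, hbc⟩
  · rw [ht ha hc hac, ht hb hd hbd]
  · rw [ht ha hd had, ht hb hc hbc, Finset.pair_comm]

open Classical in
def pairSegment (t : ι → ℝ) (e : Finset ι) : Set Pt :=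
  if h : ∃ a b, e = {a, b} then edgeSegment (t h.choose) (t h.choose_spec.choose) else ∅

lemma exists_pairSegment_eq (t : ι → ℝ) {e : Finset ι} (h : ∃ a b, e = {a, b}) :
    ∃ a b, e = {a, b} ∧ pairSegment t e = edgeSegment (t a) (t b) :=
  ⟨_, _, h.choose_spec.choose_spec, by rw [pairSegment, dif_pos h]⟩

section

variable {H : FinHypergraph ι} {t : ι → ℝ}

lemma mem_iff_parabolaPt_mem_pairSegment (ht : InjOn t H.V)
    (hpair : ∀ e ∈ H.E, ∃ a b, e = {a, b}) {v : ι} (hv : v ∈ H.V) {e : Finset ι} (he : e ∈ H.E) :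
    v ∈ e ↔ parabolaPt (t v) ∈ pairSegment t e := by
  obtain ⟨a, b, rfl, hβ⟩ := exists_pairSegment_eq t (hpair e he)
  have hV := H.edge_subset _ he
  rw [hβ, parabolaPt_mem_edgeSegment_iff, Finset.mem_insert, Finset.mem_singleton,
    ht.eq_iff hv (hV (by simp)), ht.eq_iff hv (hV (by simp))]

def parabolaSegmentRep (ht : InjOn t H.V) (hpair : ∀ e ∈ H.E, ∃ a b, e = {a, b}) :
    SegmentRep H where
  α v := parabolaPt (t v)
  β := pairSegment t
  α_inj _ hv _ hw h := ht hv hw (congrArg Prod.fst h)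
  β_inj := H.injOn_of_incidence fun _ hv _ he => mem_iff_parabolaPt_mem_pairSegment ht hpair hv he
  β_isSegment e he := by
    obtain ⟨a, b, -, hβ⟩ := exists_pairSegment_eq t (hpair e he)
    exact hβ ▸ isSegment_edgeSegment _ _
  incidence _ hv _ he := mem_iff_parabolaPt_mem_pairSegment ht hpair hv he

lemma parabolaSegmentRep_strict (ht : InjOn t H.V) (hpair : ∀ e ∈ H.E, ∃ a b, e = {a, b}) :
    (parabolaSegmentRep ht hpair).Strict := by
  intro e he e' he' hne
  obtain ⟨a, b, rfl, hβ⟩ := exists_pairSegment_eq t (hpair e he)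
  obtain ⟨c, d, rfl, hβ'⟩ := exists_pairSegment_eq t (hpair e' he')
  change (pairSegment t _ ∩ pairSegment t _).Subsingleton
  rw [hβ, hβ']
  exact edgeSegment_inter_subsingleton fun h =>
    hne (pair_eq_pair_of_injOn ht (H.edge_subset _ he) (H.edge_subset _ he') h)

end

end

theorem stmt6 {ι : Type} (H : FinHypergraph ι) (hrank : ∀ e ∈ H.E, e.card ≤ 2) :
    ∃ R : SegmentRep H, R.Strict := by
  classical
  obtain ⟨f, hf⟩ := countable_iff_exists_injOn.mp H.V.countable_toSet
  have ht : InjOn (fun v => (f v : ℝ)) H.V := fun v hv w hw h => hf hv hw (Nat.cast_injective h)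
  have hpair : ∀ e ∈ H.E, ∃ a b, e = {a, b} := fun e he =>
    exists_eq_pair_of_card_le_two (H.edge_nonempty e he) (hrank e he)
  exact ⟨parabolaSegmentRep ht hpair, parabolaSegmentRep_strict ht hpair⟩
end

section
/- Every linear hypergraph in which every vertex has degree at most 2 has a strict segment representation. -/
set_option maxRecDepth 8000

/-!
Give the edges distinct integer labels `t` and draw edge `t` on the tangent line
`y = 2 t x - t²` of the parabola `y = x²`. The tangent lines through a point `p` are those whose
label solves `(t - p.1)² = p.1² - p.2`, so `p` lies on at most two of them, and the point
`((a + b) / 2, a b)` lies exactly on the tangents at `a` and `b`. A vertex of degree at most two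
is placed at this point for `a, b` the labels of its edges, with any missing label replaced by a
half-integer that depends on the vertex and therefore is the label of no edge. Two distinct
tangent lines meet in one point, so cutting the lines to segments long enough to contain all
vertex points gives a strict representation. A vertex point determines its two roots, hence the
edges of the vertex and, if it has fewer than two, its half-integer; so by linearity distinct
vertices receive distinct points.
-/

namespace Parabola

def tangentPoint (t : ℝ) : ℝ →ᵃ[ℝ] Pt :=
  AffineMap.lineMap (0, -t ^ 2) (1, 2 * t - t ^ 2)

lemma tangentPoint_apply (t x : ℝ) : tangentPoint t x = (x, 2 * t * x - t ^ 2) := by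
  simp only [tangentPoint, AffineMap.lineMap_apply_module, Prod.smul_mk, smul_eq_mul,
    Prod.mk_add_mk]
  ring_nf

def tangentLine (t : ℝ) : Set Pt := {p | p.2 = 2 * t * p.1 - t ^ 2}

lemma mem_tangentLine {t : ℝ} {p : Pt} : p ∈ tangentLine t ↔ p.2 = 2 * t * p.1 - t ^ 2 :=
  Iff.rfl

lemma tangentLine_inter_subsingleton {t s : ℝ} (h : t ≠ s) :
    (tangentLine t ∩ tangentLine s).Subsingleton := by
  have fst_eq : ∀ p ∈ tangentLine t ∩ tangentLine s, p.1 = (t + s) / 2 := by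
    rintro p ⟨hpt, hps⟩
    rw [mem_tangentLine] at hpt hps
    have : (t - s) * (2 * p.1 - (t + s)) = 0 := by linear_combination hps - hpt
    linarith [(mul_eq_zero.1 this).resolve_left (sub_ne_zero.2 h)]
  intro p hp q hq
  have h1 : p.1 = q.1 := (fst_eq p hp).trans (fst_eq q hq).symm
  exact Prod.ext h1 (by rw [hp.1, hq.1, h1])

def tangentSegment (r t : ℝ) : Set Pt := segment ℝ (tangentPoint t (-r)) (tangentPoint t r)

lemma mem_tangentSegment {r t : ℝ} (hr : 0 ≤ r) {p : Pt} :
    p ∈ tangentSegment r t ↔ p ∈ tangentLine t ∧ |p.1| ≤ r := by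
  rw [tangentSegment, ← image_segment, segment_eq_Icc (by linarith), abs_le]
  constructor
  · rintro ⟨x, hx, rfl⟩
    rw [tangentPoint_apply]
    exact ⟨rfl, hx⟩
  · rintro ⟨hp, hx⟩
    exact ⟨p.1, hx, by rw [tangentPoint_apply, ← hp]⟩

lemma isSegment_tangentSegment {r : ℝ} (hr : 0 < r) (t : ℝ) : IsSegment (tangentSegment r t) := by
  refine ⟨_, _, fun h => ?_, rfl⟩
  have := congrArg Prod.fst h
  rw [tangentPoint_apply, tangentPoint_apply] at this
  linarith

lemma tangentSegment_injective {r : ℝ} (hr : 0 < r) : Function.Injective (tangentSegment r) := by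
  intro t s h
  by_contra hts
  have mem_inter : ∀ x, |x| ≤ r → tangentPoint t x ∈ tangentLine t ∩ tangentLine s := by
    intro x hx
    have on_t : tangentPoint t x ∈ tangentLine t := by
      rw [tangentPoint_apply, mem_tangentLine]
    have hmem : tangentPoint t x ∈ tangentSegment r t :=
      (mem_tangentSegment hr.le).2 ⟨on_t, by rwa [tangentPoint_apply]⟩
    rw [h, mem_tangentSegment hr.le] at hmem
    exact ⟨on_t, hmem.1⟩
  have := congrArg Prod.fst <| tangentLine_inter_subsingleton hts
    (mem_inter r (abs_of_pos hr).le) (mem_inter (-r) (by rw [abs_neg, abs_of_pos hr]))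
  rw [tangentPoint_apply, tangentPoint_apply] at this
  linarith

noncomputable def vietaPoint (m : Multiset ℝ) : Pt := (m.sum / 2, m.prod)

lemma vietaPoint_mem_tangentLine {m : Multiset ℝ} (hm : Multiset.card m = 2) {t : ℝ} :
    vietaPoint m ∈ tangentLine t ↔ t ∈ m := by
  obtain ⟨a, b, rfl⟩ := Multiset.card_eq_two.1 hm
  simp only [vietaPoint, mem_tangentLine, Multiset.insert_eq_cons, Multiset.sum_cons,
    Multiset.sum_singleton, Multiset.prod_cons, Multiset.prod_singleton, Multiset.mem_cons,
    Multiset.mem_singleton]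
  rw [← sub_eq_zero (a := t), ← sub_eq_zero (a := t), ← mul_eq_zero]
  constructor <;> intro h <;> linear_combination h

end Parabola

lemma natCast_ne_natCast_add_half (m n : ℕ) : (m : ℝ) ≠ n + 1 / 2 := by
  intro h
  have : ((2 * m : ℕ) : ℝ) = ((2 * n + 1 : ℕ) : ℝ) := by push_cast; linarith
  have := Nat.cast_injective this
  omega

namespace FinHypergraph

open Finset Parabola

variable {ι : Type} [DecidableEq ι] (H : FinHypergraph ι)

def incidentEdges (v : ι) : Finset (Finset ι) := H.E.filter (fun e => v ∈ e)

lemma mem_incidentEdges {v : ι} {e : Finset ι} : e ∈ H.incidentEdges v ↔ e ∈ H.E ∧ v ∈ e :=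
  mem_filter

variable (edgeLabel : Finset ι → ℕ) (vertexLabel : ι → ℕ)

noncomputable def vertexRoots (v : ι) : Multiset ℝ :=
  (H.incidentEdges v).val.map (fun e => (edgeLabel e : ℝ)) +
    Multiset.replicate (2 - #(H.incidentEdges v)) ((vertexLabel v : ℝ) + 1 / 2)

noncomputable def vertexPoint (v : ι) : Pt := vietaPoint (H.vertexRoots edgeLabel vertexLabel v)

noncomputable def segmentRadius : ℝ := 1 + ∑ v ∈ H.V, |(H.vertexPoint edgeLabel vertexLabel v).1|

variable {H edgeLabel vertexLabel}

lemma card_vertexRoots {v : ι} (hv : #(H.incidentEdges v) ≤ 2) :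
    Multiset.card (H.vertexRoots edgeLabel vertexLabel v) = 2 := by
  simp only [vertexRoots, Multiset.card_add, Multiset.card_map, card_val,
    Multiset.card_replicate]
  omega

lemma mem_vertexRoots {v : ι} {x : ℝ} :
    x ∈ H.vertexRoots edgeLabel vertexLabel v ↔
      (∃ e ∈ H.incidentEdges v, (edgeLabel e : ℝ) = x) ∨
        (#(H.incidentEdges v) < 2 ∧ x = vertexLabel v + 1 / 2) := by
  simp only [vertexRoots, Multiset.mem_add, Multiset.mem_map, mem_val, Multiset.mem_replicate,
    Nat.sub_ne_zero_iff_lt]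

lemma natCast_edgeLabel_mem_vertexRoots (hE : Set.InjOn edgeLabel H.E) {v : ι} {e : Finset ι}
    (he : e ∈ H.E) : (edgeLabel e : ℝ) ∈ H.vertexRoots edgeLabel vertexLabel v ↔ v ∈ e := by
  rw [mem_vertexRoots]
  constructor
  · rintro (⟨e', he', heq⟩ | ⟨-, heq⟩)
    · obtain ⟨he'E, hve'⟩ := H.mem_incidentEdges.1 he'
      rwa [← hE he'E he (Nat.cast_injective heq)]
    · exact absurd heq (natCast_ne_natCast_add_half _ _)
  · exact fun hve => Or.inl ⟨e, H.mem_incidentEdges.2 ⟨he, hve⟩, rfl⟩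

lemma half_mem_vertexRoots {v w : ι} :
    (vertexLabel w : ℝ) + 1 / 2 ∈ H.vertexRoots edgeLabel vertexLabel v ↔
      #(H.incidentEdges v) < 2 ∧ vertexLabel w = vertexLabel v := by
  rw [mem_vertexRoots]
  constructor
  · rintro (⟨e, -, heq⟩ | ⟨hv, heq⟩)
    · exact absurd heq (natCast_ne_natCast_add_half _ _)
    · exact ⟨hv, by exact_mod_cast add_right_cancel heq⟩
  · rintro ⟨hv, heq⟩
    exact Or.inr ⟨hv, by rw [heq]⟩

lemma vertexPoint_mem_tangentLine {v : ι} (hv : #(H.incidentEdges v) ≤ 2) {t : ℝ} :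
    H.vertexPoint edgeLabel vertexLabel v ∈ tangentLine t ↔
      t ∈ H.vertexRoots edgeLabel vertexLabel v :=
  vietaPoint_mem_tangentLine (card_vertexRoots hv)

lemma injOn_vertexPoint (hlin : ∀ e ∈ H.E, ∀ e' ∈ H.E, e ≠ e' → #(e ∩ e') ≤ 1)
    (hdeg : ∀ v ∈ H.V, #(H.incidentEdges v) ≤ 2)
    (hE : Set.InjOn edgeLabel H.E) (hV : Set.InjOn vertexLabel H.V) :
    Set.InjOn (H.vertexPoint edgeLabel vertexLabel) H.V := by
  intro v hv w hw h
  have roots_iff : ∀ x, x ∈ H.vertexRoots edgeLabel vertexLabel v ↔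
      x ∈ H.vertexRoots edgeLabel vertexLabel w := fun x => by
    rw [← vertexPoint_mem_tangentLine (hdeg v hv), h, vertexPoint_mem_tangentLine (hdeg w hw)]
  by_cases hv2 : #(H.incidentEdges v) < 2
  · have hmem := (roots_iff _).1 (half_mem_vertexRoots.2 ⟨hv2, rfl⟩)
    exact hV hv hw (half_mem_vertexRoots.1 hmem).2
  · have hv2 : #(H.incidentEdges v) = 2 := by have := hdeg v hv; omega
    obtain ⟨a, b, hab, hs⟩ := card_eq_two.1 hv2
    have mem_both : ∀ e ∈ H.incidentEdges v, e ∈ H.E ∧ v ∈ e ∧ w ∈ e := by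
      intro e he
      obtain ⟨heE, hve⟩ := H.mem_incidentEdges.1 he
      refine ⟨heE, hve, ?_⟩
      rwa [← natCast_edgeLabel_mem_vertexRoots hE heE, ← roots_iff,
        natCast_edgeLabel_mem_vertexRoots hE heE]
    obtain ⟨ha, hva, hwa⟩ := mem_both a (by simp [hs])
    obtain ⟨hb, hvb, hwb⟩ := mem_both b (by simp [hs])
    exact card_le_one.1 (hlin a ha b hb hab) v (mem_inter.2 ⟨hva, hvb⟩) w (mem_inter.2 ⟨hwa, hwb⟩)

lemma segmentRadius_pos : 0 < H.segmentRadius edgeLabel vertexLabel :=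
  add_pos_of_pos_of_nonneg one_pos (sum_nonneg fun _ _ => abs_nonneg _)

lemma abs_vertexPoint_fst_le {v : ι} (hv : v ∈ H.V) :
    |(H.vertexPoint edgeLabel vertexLabel v).1| ≤ H.segmentRadius edgeLabel vertexLabel :=
  (single_le_sum (f := fun w => |(H.vertexPoint edgeLabel vertexLabel w).1|)
    (fun _ _ => abs_nonneg _) hv).trans (le_add_of_nonneg_left zero_le_one)

lemma vertexPoint_mem_tangentSegment (hdeg : ∀ v ∈ H.V, #(H.incidentEdges v) ≤ 2)
    (hE : Set.InjOn edgeLabel H.E) {v : ι} (hv : v ∈ H.V) {e : Finset ι} (he : e ∈ H.E) :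
    H.vertexPoint edgeLabel vertexLabel v ∈
        tangentSegment (H.segmentRadius edgeLabel vertexLabel) (edgeLabel e) ↔ v ∈ e := by
  rw [mem_tangentSegment segmentRadius_pos.le, vertexPoint_mem_tangentLine (hdeg v hv),
    natCast_edgeLabel_mem_vertexRoots hE he, and_iff_left (abs_vertexPoint_fst_le hv)]

variable (hlin : ∀ e ∈ H.E, ∀ e' ∈ H.E, e ≠ e' → #(e ∩ e') ≤ 1)
    (hdeg : ∀ v ∈ H.V, #(H.incidentEdges v) ≤ 2)
    (hE : Set.InjOn edgeLabel H.E) (hV : Set.InjOn vertexLabel H.V)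

noncomputable def tangentSegmentRep : SegmentRep H where
  α := H.vertexPoint edgeLabel vertexLabel
  β e := tangentSegment (H.segmentRadius edgeLabel vertexLabel) (edgeLabel e)
  α_inj := injOn_vertexPoint hlin hdeg hE hV
  β_inj _ he _ he' h :=
    hE he he' (Nat.cast_injective (tangentSegment_injective segmentRadius_pos h))
  β_isSegment _ _ := isSegment_tangentSegment segmentRadius_pos _
  incidence _ hv _ he := (vertexPoint_mem_tangentSegment hdeg hE hv he).symm

lemma tangentSegmentRep_strict : (tangentSegmentRep hlin hdeg hE hV).Strict := by
  intro e he e' he' hne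
  have on_line : ∀ e'', (tangentSegmentRep hlin hdeg hE hV).β e'' ⊆ tangentLine (edgeLabel e'') :=
    fun _ _ hp => ((mem_tangentSegment segmentRadius_pos.le).1 hp).1
  exact (tangentLine_inter_subsingleton (by exact_mod_cast hE.ne he he' hne)).anti
    (Set.inter_subset_inter (on_line e) (on_line e'))

end FinHypergraph

theorem stmt7 {ι : Type} [DecidableEq ι] (H : FinHypergraph ι)
    (hlin : ∀ e ∈ H.E, ∀ e' ∈ H.E, e ≠ e' → (e ∩ e').card ≤ 1)
    (hdeg : ∀ v ∈ H.V, (H.E.filter (fun e => v ∈ e)).card ≤ 2) :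
    ∃ R : SegmentRep H, R.Strict := by
  obtain ⟨edgeLabel, hE⟩ := Set.countable_iff_exists_injOn.1 H.E.countable_toSet
  obtain ⟨vertexLabel, hV⟩ := Set.countable_iff_exists_injOn.1 H.V.countable_toSet
  exact ⟨H.tangentSegmentRep hlin hdeg hE hV, H.tangentSegmentRep_strict hlin hdeg hE hV⟩
end

section
/- Let a, b1, b2, c1, c2, d be pairwise distinct vertices. The rigid parallel 2-path, i.e. the hypergraph with vertex set {a,b1,b2,c1,c2,d} and hyperedges {a,b1,c1}, {b1,c1,d}, {a,b2,c2}, {b2,c2,d}, has no segment representation. -/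
set_option maxRecDepth 8000

/-! In a segment representation the segments of `{a, b₁, c₁}` and `{b₁, c₁, d}` share the two
distinct points `b₁`, `c₁`, so `a`, `b₁`, `d` are collinear; as segments are convex and miss the
vertices not incident to them, `b₁` must lie between `a` and `d`. Likewise `b₂` lies between `a`
and `d`. But then `b₁` lies on `[a, b₂]` or on `[b₂, d]`, hence on the segment of `{a, b₂, c₂}` or
of `{b₂, c₂, d}`, neither of which contains `b₁`. -/

section Betweenness

variable {R V P : Type*} [Field R] [LinearOrder R] [IsStrictOrderedRing R]
  [AddCommGroup V] [Module R V] [AddTorsor V P]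

theorem Wbtw.wbtw_or_wbtw_of_wbtw {x y z w : P} (hy : Wbtw R x y w) (hz : Wbtw R x z w) :
    Wbtw R x y z ∨ Wbtw R z y w := by
  have h : Wbtw R x y z ∨ Wbtw R x z y := by
    obtain ⟨s, hs, rfl⟩ := hy
    obtain ⟨t, ht, rfl⟩ := hz
    simpa only [AffineMap.lineMap_apply] using wbtw_or_wbtw_smul_vadd_of_nonneg x (w -ᵥ x) hs.1 ht.1
  exact h.imp_right hy.trans_left_right

end Betweenness

theorem IsSegment.convex {S : Set Pt} (hS : IsSegment S) : Convex ℝ S := by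
  obtain ⟨x, y, -, rfl⟩ := hS
  exact convex_segment x y

theorem IsSegment.collinear {S : Set Pt} (hS : IsSegment S) : Collinear ℝ S := by
  obtain ⟨x, y, -, rfl⟩ := hS
  rw [collinear_iff_of_mem (left_mem_segment ℝ x y)]
  refine ⟨y -ᵥ x, fun p hp => ?_⟩
  rw [segment_eq_image_lineMap] at hp
  obtain ⟨t, -, rfl⟩ := hp
  exact ⟨t, AffineMap.lineMap_apply _ _ _⟩

namespace SegmentRep

variable {ι : Type} {H : FinHypergraph ι} (R : SegmentRep H) {e e' : Finset ι} {v x y z w : ι}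

theorem α_mem_β (he : e ∈ H.E) (hv : v ∈ e) : R.α v ∈ R.β e :=
  (R.incidence v (H.edge_subset e he hv) e he).1 hv

theorem mem_of_wbtw (he : e ∈ H.E) (hy : y ∈ H.V) (hx : x ∈ e) (hz : z ∈ e)
    (h : Wbtw ℝ (R.α x) (R.α y) (R.α z)) : y ∈ e :=
  (R.incidence y hy e he).2 ((R.β_isSegment e he).convex.segment_subset (R.α_mem_β he hx)
    (R.α_mem_β he hz) (mem_segment_iff_wbtw.2 h))

theorem wbtw_of_edges_share_pair [DecidableEq ι] (he : e ∈ H.E) (he' : e' ∈ H.E)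
    (hxyw : {x, y, w} ⊆ e) (hywz : {y, w, z} ⊆ e') (hyw : y ≠ w) (hxe' : x ∉ e')
    (hze : z ∉ e) : Wbtw ℝ (R.α x) (R.α y) (R.α z) := by
  simp only [Finset.insert_subset_iff, Finset.singleton_subset_iff] at hxyw hywz
  obtain ⟨hx, hy, hw⟩ := hxyw
  obtain ⟨hy', hw', hz⟩ := hywz
  have hYW : R.α y ≠ R.α w := fun h =>
    hyw (R.α_inj (H.edge_subset e he hy) (H.edge_subset e he hw) h)
  have hcol : Collinear ℝ {R.α x, R.α y, R.α z} :=
    collinear_triple_of_mem_affineSpan_pair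
      ((R.β_isSegment e he).collinear.mem_affineSpan_of_mem_of_ne (R.α_mem_β he hy)
        (R.α_mem_β he hw) (R.α_mem_β he hx) hYW)
      (left_mem_affineSpan_pair ℝ _ _)
      ((R.β_isSegment e' he').collinear.mem_affineSpan_of_mem_of_ne (R.α_mem_β he' hy')
        (R.α_mem_β he' hw') (R.α_mem_β he' hz) hYW)
  rcases hcol.wbtw_or_wbtw_or_wbtw with h | h | h
  · exact h
  · exact absurd (R.mem_of_wbtw he (H.edge_subset e' he' hz) hy hx h) hze
  · exact absurd (R.mem_of_wbtw he' (H.edge_subset e he hx) hz hy' h) hxe'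

end SegmentRep

theorem stmt9 {ι : Type} [DecidableEq ι] (a b₁ b₂ c₁ c₂ d : ι)
    (hdist : [a, b₁, b₂, c₁, c₂, d].Pairwise (· ≠ ·))
    (H : FinHypergraph ι) (hV : H.V = {a, b₁, b₂, c₁, c₂, d})
    (hE : H.E = {({a, b₁, c₁} : Finset ι), {b₁, c₁, d}, {a, b₂, c₂}, {b₂, c₂, d}}) :
    ¬ Nonempty (SegmentRep H) := by
  rintro ⟨R⟩
  simp only [List.pairwise_cons, List.mem_cons, List.not_mem_nil, forall_eq_or_imp,
    List.Pairwise.nil, IsEmpty.forall_iff, implies_true, and_true] at hdist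
  obtain ⟨⟨hab₁, hab₂, hac₁, hac₂, had⟩, ⟨hb₁b₂, hb₁c₁, hb₁c₂, hb₁d⟩, ⟨-, hb₂c₂, hb₂d⟩,
    ⟨-, hc₁d⟩, hc₂d⟩ := hdist
  have he₁ : {a, b₁, c₁} ∈ H.E := by simp [hE]
  have he₂ : {b₁, c₁, d} ∈ H.E := by simp [hE]
  have he₃ : {a, b₂, c₂} ∈ H.E := by simp [hE]
  have he₄ : {b₂, c₂, d} ∈ H.E := by simp [hE]
  have hb₁ : Wbtw ℝ (R.α a) (R.α b₁) (R.α d) :=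
    R.wbtw_of_edges_share_pair he₁ he₂ subset_rfl subset_rfl hb₁c₁ (by simp [hab₁, hac₁, had])
      (by simp [had.symm, hb₁d.symm, hc₁d.symm])
  have hb₂ : Wbtw ℝ (R.α a) (R.α b₂) (R.α d) :=
    R.wbtw_of_edges_share_pair he₃ he₄ subset_rfl subset_rfl hb₂c₂ (by simp [hab₂, hac₂, had])
      (by simp [had.symm, hb₂d.symm, hc₂d.symm])
  have hvb₁ : b₁ ∈ H.V := by simp [hV]
  rcases hb₁.wbtw_or_wbtw_of_wbtw hb₂ with h | h
  · exact absurd (R.mem_of_wbtw he₃ hvb₁ (by simp) (by simp) h)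
      (by simp [hab₁.symm, hb₁b₂, hb₁c₂])
  · exact absurd (R.mem_of_wbtw he₄ hvb₁ (by simp) (by simp) h) (by simp [hb₁b₂, hb₁c₂, hb₁d])
end

section
/- Let t ≥ 3 and let H be the hypergraph with pairwise distinct vertices v1,…,vt and hyperedges e_i = {v_i, v_{i+1}, v_{i+2}} for 1 ≤ i ≤ t−2. In every segment representation (α, β) of H, the points α(v1),…,α(vt) are collinear. -/
set_option maxRecDepth 8000

/-!
Each hyperedge `{vᵢ, vᵢ₊₁, vᵢ₊₂}` is drawn on a segment, so every three consecutive points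
`α(vᵢ), α(vᵢ₊₁), α(vᵢ₊₂)` are collinear. Since `α` is injective, two consecutive points span a
line, and this line then also contains the next point; inductively all points lie on the line
through `α(v₁)` and `α(v₂)`.
-/

theorem collinear_segment {𝕜 E : Type*} [DivisionRing 𝕜] [PartialOrder 𝕜] [AddCommGroup E]
    [Module 𝕜 E] (x y : E) : Collinear 𝕜 (segment 𝕜 x y) := by
  rw [collinear_iff_exists_forall_eq_smul_vadd]
  refine ⟨x, y - x, ?_⟩
  rintro _ ⟨a, b, -, -, hab, rfl⟩
  refine ⟨b, ?_⟩
  rw [eq_sub_of_add_eq hab, vadd_eq_add, sub_smul, one_smul, smul_sub]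
  abel

theorem SegmentRep.collinear_image_edge {ι : Type} {H : FinHypergraph ι} (R : SegmentRep H)
    {e : Finset ι} (he : e ∈ H.E) : Collinear ℝ (R.α '' e) := by
  refine (R.β_isSegment e he).collinear.subset ?_
  rintro _ ⟨x, hx, rfl⟩
  exact (R.incidence x (H.edge_subset e he hx) e he).1 hx

theorem collinear_image_Icc_of_collinear_consecutive {k V P : Type*} [DivisionRing k]
    [AddCommGroup V] [Module k V] [AddTorsor V P] (p : ℕ → P) (a b : ℕ)
    (hcol : ∀ i, a ≤ i → i + 2 ≤ b → Collinear k {p i, p (i + 1), p (i + 2)})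
    (hne : ∀ i, a ≤ i → i + 1 ≤ b → p i ≠ p (i + 1)) :
    Collinear k (p '' Set.Icc a b) := by
  rcases Nat.lt_or_ge b (a + 1) with hb | hb
  · refine (collinear_singleton k (p a)).subset ?_
    rintro _ ⟨i, hi, rfl⟩
    rw [Set.mem_singleton_iff, show i = a by grind]
  suffices ∀ m, a + 1 ≤ m → m ≤ b → Collinear k (p '' Set.Icc a m) from this b hb le_rfl
  intro m hm
  induction m, hm using Nat.le_induction with
  | base =>
    intro _
    rw [show Set.Icc a (a + 1) = {a, a + 1} by ext; grind, Set.image_pair]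
    exact collinear_pair k _ _
  | succ m hm ih =>
    intro hmb
    obtain ⟨j, rfl⟩ : ∃ j, m = j + 1 := ⟨m - 1, by omega⟩
    have hline : p (j + 1 + 1) ∈ line[k, p j, p (j + 1)] :=
      (hcol j (by omega) hmb).mem_affineSpan_of_mem_of_ne (by simp) (by simp) (by simp)
        (hne j (by omega) (by omega))
    have hpair : {p j, p (j + 1)} ⊆ p '' Set.Icc a (j + 1) :=
      Set.insert_subset_iff.2 ⟨Set.mem_image_of_mem p ⟨by omega, by omega⟩,
        Set.singleton_subset_iff.2 (Set.mem_image_of_mem p ⟨by omega, le_rfl⟩)⟩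
    rw [← Set.insert_Icc_right_eq_Icc_add_one (by omega), Set.image_insert_eq,
      collinear_insert_iff_of_mem_affineSpan (affineSpan_mono k hpair hline)]
    exact ih (by omega)

theorem stmt11_general {ι : Type} [DecidableEq ι] (t : ℕ) (v : ℕ → ι)
    (hv : ∀ i ∈ Finset.Icc 1 t, ∀ j ∈ Finset.Icc 1 t, v i = v j → i = j)
    (H : FinHypergraph ι)
    (hV : H.V = (Finset.Icc 1 t).image v)
    (hE : H.E = (Finset.Icc 1 (t - 2)).image
      (fun i => ({v i, v (i + 1), v (i + 2)} : Finset ι)))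
    (R : SegmentRep H) :
    Collinear ℝ {p : Pt | ∃ i, 1 ≤ i ∧ i ≤ t ∧ p = R.α (v i)} := by
  have hvV : ∀ i ∈ Finset.Icc 1 t, v i ∈ H.V := fun i hi => hV ▸ Finset.mem_image_of_mem v hi
  have hpoints : {p : Pt | ∃ i, 1 ≤ i ∧ i ≤ t ∧ p = R.α (v i)} = (R.α ∘ v) '' Set.Icc 1 t := by
    ext; simp [eq_comm, and_assoc]
  rw [hpoints]
  refine collinear_image_Icc_of_collinear_consecutive _ 1 t (fun i hi hit => ?_)
    (fun i hi hit hαv => ?_)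
  · have he : {v i, v (i + 1), v (i + 2)} ∈ H.E :=
      hE ▸ Finset.mem_image_of_mem _ (Finset.mem_Icc.2 ⟨hi, by omega⟩)
    simpa [Set.image_insert_eq] using R.collinear_image_edge he
  · have hi_mem : i ∈ Finset.Icc 1 t := Finset.mem_Icc.2 ⟨hi, by omega⟩
    have hsucc_mem : i + 1 ∈ Finset.Icc 1 t := Finset.mem_Icc.2 ⟨by omega, hit⟩
    have hself_succ : i = i + 1 :=
      hv i hi_mem (i + 1) hsucc_mem (R.α_inj (hvV i hi_mem) (hvV (i + 1) hsucc_mem) hαv)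
    omega

theorem stmt11 {ι : Type} [DecidableEq ι] (t : ℕ) (ht : 3 ≤ t) (v : ℕ → ι)
    (hv : ∀ i ∈ Finset.Icc 1 t, ∀ j ∈ Finset.Icc 1 t, v i = v j → i = j)
    (H : FinHypergraph ι)
    (hV : H.V = (Finset.Icc 1 t).image v)
    (hE : H.E = (Finset.Icc 1 (t - 2)).image
      (fun i => ({v i, v (i + 1), v (i + 2)} : Finset ι)))
    (R : SegmentRep H) :
    Collinear ℝ {p : Pt | ∃ i, 1 ≤ i ∧ i ≤ t ∧ p = R.α (v i)} :=
  stmt11_general t v hv H hV hE R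
end

section
/- Let H=(V,E) be a linear hypergraph in which every vertex has degree at most 2. Then H admits a crossing-free line representation if and only if for all pairwise distinct hyperedges e1, e2, e3 ∈ E, if e1 ∩ e2 = ∅ and e2 ∩ e3 = ∅ then e1 ∩ e3 = ∅ (i.e., the hyperedge intersection graph of H is a complete multipartite graph). -/
set_option maxRecDepth 8000

/-!
Disjoint hyperedges are drawn as disjoint, hence parallel, lines, and parallelism is transitive
in the plane; if `e₁ ∥ e₂ ∥ e₃` and `e₁, e₃` shared a vertex, their lines would coincide.

Conversely, "equal or disjoint" is then an equivalence relation on the hyperedges. Giving each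
class its own slope makes two lines meet exactly when their hyperedges do, and generic intercepts
make parallel lines distinct and keep every point on at most two lines. A vertex of degree two
goes to the crossing of its two lines, which lies on no third line, and linearity prevents two
vertices from sharing it. A vertex of degree at most one has infinitely many admissible
positions (on its line, or on a vertical line, avoiding all other lines), so these vertices can
be placed injectively.
-/

open Module

theorem Submodule.sup_eq_top_of_finrank_eq_one {K V : Type*} [Field K] [AddCommGroup V]
    [Module K V] [FiniteDimensional K V] (hV : finrank K V = 2) {U W : Submodule K V}
    (hU : finrank K U = 1) (hW : finrank K W = 1) (hUW : U ≠ W) : U ⊔ W = ⊤ := by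
  refine Submodule.eq_top_of_finrank_eq (le_antisymm (Submodule.finrank_le _) ?_)
  by_contra! hlt
  have hle : finrank K ↥(U ⊔ W) ≤ 1 := by
    rw [hV] at hlt
    have := Submodule.finrank_mono (le_sup_left : U ≤ U ⊔ W)
    omega
  have hUsup := Submodule.eq_of_le_of_finrank_le le_sup_left (hle.trans hU.ge)
  have hWsup := Submodule.eq_of_le_of_finrank_le le_sup_right (hle.trans hW.ge)
  exact hUW (hUsup.trans hWsup.symm)

theorem finrank_direction_affineSpan_pair {a b : Pt} (hab : a ≠ b) :
    finrank ℝ (line[ℝ, a, b]).direction = 1 := by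
  rw [direction_affineSpan, vectorSpan_pair]
  exact finrank_span_singleton (vsub_ne_zero.mpr hab)

theorem direction_eq_of_disjoint_affineSpan_pair {a b c d : Pt} (hab : a ≠ b) (hcd : c ≠ d)
    (h : Disjoint (line[ℝ, a, b] : Set Pt) line[ℝ, c, d]) :
    (line[ℝ, a, b]).direction = (line[ℝ, c, d]).direction := by
  by_contra hne
  have htop := Submodule.sup_eq_top_of_finrank_eq_one (by simp)
    (finrank_direction_affineSpan_pair hab) (finrank_direction_affineSpan_pair hcd) hne
  obtain ⟨p, hp⟩ := AffineSubspace.inter_nonempty_of_nonempty_of_sup_direction_eq_top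
    ⟨a, left_mem_affineSpan_pair ℝ a b⟩ ⟨c, left_mem_affineSpan_pair ℝ c d⟩ htop
  exact Set.disjoint_left.mp h hp.1 hp.2

theorem IsLine.eq_of_disjoint_of_disjoint {L₁ L₂ L₃ : Set Pt} (h₁ : IsLine L₁) (h₂ : IsLine L₂)
    (h₃ : IsLine L₃) (h₁₂ : Disjoint L₁ L₂) (h₂₃ : Disjoint L₂ L₃) (h₁₃ : (L₁ ∩ L₃).Nonempty) :
    L₁ = L₃ := by
  obtain ⟨a₁, b₁, hab₁, rfl⟩ := h₁
  obtain ⟨a₂, b₂, hab₂, rfl⟩ := h₂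
  obtain ⟨a₃, b₃, hab₃, rfl⟩ := h₃
  have hdir := (direction_eq_of_disjoint_affineSpan_pair hab₁ hab₂ h₁₂).trans
    (direction_eq_of_disjoint_affineSpan_pair hab₂ hab₃ h₂₃)
  rw [AffineSubspace.ext_of_direction_eq hdir h₁₃]

theorem LineRep.CrossingFree.inter_eq_empty_trans {ι : Type} [DecidableEq ι]
    {H : FinHypergraph ι} {R : LineRep H} (hR : R.CrossingFree) {e₁ e₂ e₃ : Finset ι}
    (he₁ : e₁ ∈ H.E) (he₂ : e₂ ∈ H.E) (he₃ : e₃ ∈ H.E) (h₁₃ : e₁ ≠ e₃)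
    (h₁₂ : e₁ ∩ e₂ = ∅) (h₂₃ : e₂ ∩ e₃ = ∅) : e₁ ∩ e₃ = ∅ := by
  have hdisj : ∀ {e e'}, e ∈ H.E → e' ∈ H.E → e ∩ e' = ∅ → Disjoint (R.β e) (R.β e') := by
    intro e e' he he' hee'
    rw [Set.disjoint_iff_inter_eq_empty, ← Set.not_nonempty_iff_eq_empty, hR e he e' he']
    simpa [← Finset.mem_inter, Finset.eq_empty_iff_forall_notMem] using hee'
  by_contra hne
  obtain ⟨w, hw⟩ := Finset.nonempty_iff_ne_empty.mpr hne
  rw [Finset.mem_inter] at hw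
  have hwV := H.edge_subset e₁ he₁ hw.1
  have hmeet : (R.β e₁ ∩ R.β e₃).Nonempty :=
    ⟨R.α w, (R.incidence w hwV e₁ he₁).mp hw.1, (R.incidence w hwV e₃ he₃).mp hw.2⟩
  exact h₁₃ (R.β_inj he₁ he₃ ((R.β_isLine e₁ he₁).eq_of_disjoint_of_disjoint
    (R.β_isLine e₂ he₂) (R.β_isLine e₃ he₃) (hdisj he₁ he₂ h₁₂) (hdisj he₂ he₃ h₂₃) hmeet))

def slopeLine (m c : ℝ) : Set Pt := {p | p.2 = m * p.1 + c}

@[simp] theorem mem_slopeLine {m c : ℝ} {p : Pt} : p ∈ slopeLine m c ↔ p.2 = m * p.1 + c :=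
  Iff.rfl

theorem isLine_slopeLine (m c : ℝ) : IsLine (slopeLine m c) := by
  refine ⟨(0, c), (1, m + c), by simp, ?_⟩
  ext p
  simp only [SetLike.mem_coe, mem_affineSpan_pair_iff_exists_lineMap_eq,
    AffineMap.lineMap_apply_module, mem_slopeLine, Prod.ext_iff, Prod.fst_add, Prod.snd_add,
    Prod.smul_fst, Prod.smul_snd, smul_eq_mul]
  constructor
  · intro hp
    exact ⟨p.1, by ring, by rw [hp]; ring⟩
  · rintro ⟨r, h₁, h₂⟩
    rw [← h₁, ← h₂]
    ring

theorem slopeLine_inj {m c m' c' : ℝ} : slopeLine m c = slopeLine m' c' ↔ m = m' ∧ c = c' := by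
  refine ⟨fun h => ?_, fun ⟨hm, hc⟩ => hm ▸ hc ▸ rfl⟩
  have h₀ : ((0 : ℝ), c) ∈ slopeLine m' c' := h ▸ by simp
  have h₁ : ((1 : ℝ), m + c) ∈ slopeLine m' c' := h ▸ by simp
  simp only [mem_slopeLine] at h₀ h₁
  constructor <;> linarith

theorem slopeLine_inter_nonempty_iff {m c m' c' : ℝ} :
    (slopeLine m c ∩ slopeLine m' c').Nonempty ↔ m ≠ m' ∨ c = c' := by
  constructor
  · rintro ⟨p, hp, hp'⟩
    rw [or_iff_not_imp_left, not_not]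
    rintro rfl
    simp only [mem_slopeLine] at hp hp'
    linarith
  · rintro (hm | rfl)
    · have hm' : m - m' ≠ 0 := sub_ne_zero.mpr hm
      refine ⟨((c' - c) / (m - m'), m * ((c' - c) / (m - m')) + c), rfl, ?_⟩
      simp only [mem_slopeLine]
      field_simp
      ring
    · exact ⟨(0, c), by simp, by simp⟩

theorem slopeLine_inter_subsingleton {m c m' c' : ℝ} (h : slopeLine m c ≠ slopeLine m' c') :
    (slopeLine m c ∩ slopeLine m' c').Subsingleton := by
  rintro p ⟨hp, hp'⟩ q ⟨hq, hq'⟩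
  simp only [mem_slopeLine] at hp hp' hq hq'
  by_contra hpq
  have h₁ : p.1 ≠ q.1 := fun h₁ => hpq (Prod.ext h₁ (by rw [hp, hq, h₁]))
  have hm : m = m' := mul_right_cancel₀ (sub_ne_zero.mpr h₁) (by linarith)
  exact h (slopeLine_inj.mpr ⟨hm, by subst hm; linarith⟩)

theorem infinite_slopeLine (m c : ℝ) : (slopeLine m c).Infinite :=
  Set.infinite_of_injective_forall_mem (f := fun x : ℝ => (x, m * x + c))
    (fun _ _ h => congrArg Prod.fst h) fun _ => rfl

theorem inter_slopeLine_subsingleton_of_fst_eq (x₀ m c : ℝ) :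
    ({p : Pt | p.1 = x₀} ∩ slopeLine m c).Subsingleton := by
  rintro p ⟨hp, hp'⟩ q ⟨hq, hq'⟩
  simp only [Set.mem_ofPred_eq, mem_slopeLine] at hp hp' hq hq'
  exact Prod.ext (hp.trans hq.symm) (by rw [hp', hq', hp, hq])

theorem Set.Finite.exists_eq_iff_of_equivalence {α : Type*} {S : Set α} (hS : S.Finite)
    {r : α → α → Prop} (hr : Equivalence fun a b : S => r a b) :
    ∃ s : α → ℕ, ∀ a ∈ S, ∀ b ∈ S, s a = s b ↔ r a b := by
  classical
  have := hS.to_subtype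
  let q : Setoid S := ⟨_, hr⟩
  obtain ⟨f, hf⟩ := Countable.exists_injective_nat (Quotient q)
  refine ⟨fun a => if h : a ∈ S then f (Quotient.mk q ⟨a, h⟩) else 0, fun a ha b hb => ?_⟩
  simp only [dif_pos ha, dif_pos hb, hf.eq_iff, Quotient.eq]
  rfl

theorem equivalence_eq_or_disjoint {ι : Type} [DecidableEq ι] {E : Finset (Finset ι)}
    (hE : ∀ e₁ ∈ E, ∀ e₂ ∈ E, ∀ e₃ ∈ E, e₁ ≠ e₂ → e₁ ≠ e₃ → e₂ ≠ e₃ →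
        e₁ ∩ e₂ = ∅ → e₂ ∩ e₃ = ∅ → e₁ ∩ e₃ = ∅) :
    Equivalence fun e f : E => (e : Finset ι) = f ∨ Disjoint (e : Finset ι) f where
  refl _ := Or.inl rfl
  symm h := h.imp Eq.symm fun h => h.symm
  trans := by
    rintro ⟨e₁, h₁⟩ ⟨e₂, h₂⟩ ⟨e₃, h₃⟩ h₁₂ h₂₃
    simp only [Finset.disjoint_iff_inter_eq_empty] at h₁₂ h₂₃ ⊢
    by_cases h₁₃ : e₁ = e₃
    · exact Or.inl h₁₃
    rcases h₁₂ with rfl | h₁₂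
    · exact h₂₃
    rcases h₂₃ with rfl | h₂₃
    · exact Or.inr h₁₂
    by_cases he₁₂ : e₁ = e₂
    · subst he₁₂; exact Or.inr h₂₃
    by_cases he₂₃ : e₂ = e₃
    · subst he₂₃; exact Or.inr h₁₂
    exact Or.inr (hE e₁ h₁ e₂ h₂ e₃ h₃ he₁₂ h₁₃ he₂₃ h₁₂ h₂₃)

open Finset in
open Classical in
theorem exists_intercepts {α : Type*} (s : α → ℝ) (E : Finset α) :
    ∃ c : α → ℝ, Set.InjOn (fun e => slopeLine (s e) (c e)) E ∧
      ∀ p : Pt, #{e ∈ E | p ∈ slopeLine (s e) (c e)} ≤ 2 := by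
  induction E using Finset.induction_on with
  | empty => exact ⟨0, by simp, by simp⟩
  | insert a E ha ih =>
    obtain ⟨c, hinj, htwo⟩ := ih
    set P := ⋃ e ∈ E, ⋃ f ∈ E, ⋃ (_ : slopeLine (s e) (c e) ≠ slopeLine (s f) (c f)),
      slopeLine (s e) (c e) ∩ slopeLine (s f) (c f)
    have hP : P.Finite :=
      E.finite_toSet.biUnion fun e _ => E.finite_toSet.biUnion fun f _ =>
        Set.finite_iUnion fun h => (slopeLine_inter_subsingleton h).finite
    -- `slopeLine (s a) x` passes through `p` iff `x = p.2 - s a * p.1`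
    obtain ⟨x, hx⟩ := ((E.finite_toSet.image c).union
      (hP.image fun p => p.2 - s a * p.1)).exists_notMem
    simp only [Set.mem_union, Set.mem_image, not_or, not_exists, not_and] at hx
    set c' := Function.update c a x
    have hc' : ∀ e ∈ E, c' e = c e := fun e he =>
      Function.update_of_ne (ne_of_mem_of_not_mem he ha) _ _
    refine ⟨c', ?_, fun p => ?_⟩
    · rw [coe_insert, Set.injOn_insert (by simpa using ha)]
      refine ⟨hinj.congr fun e he => by simp only [hc' e he], ?_⟩
      rintro ⟨e, he, hea⟩
      simp only [c', Function.update_self, hc' e he, slopeLine_inj] at hea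
      exact hx.1 e he hea.2
    rw [filter_insert]
    split_ifs with hpa
    · have hold : #{e ∈ E | p ∈ slopeLine (s e) (c' e)} ≤ 1 := by
        refine card_le_one.mpr fun e he f hf => ?_
        simp only [mem_filter] at he hf
        rw [hc' e he.1] at he
        rw [hc' f hf.1] at hf
        by_contra hef
        refine hx.2 p ?_ <| by
          simp only [c', Function.update_self, mem_slopeLine] at hpa
          linarith
        simp only [P, Set.mem_iUnion]
        exact ⟨e, he.1, f, hf.1, fun h => hef (hinj he.1 hf.1 h), he.2, hf.2⟩
      exact (card_insert_le _ _).trans (by omega)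
    · rw [filter_congr fun e he => by rw [hc' e he]]
      exact htwo p

theorem Set.Infinite.sdiff_biUnion_of_subsingleton {α β : Type*} {K : Set β} (hK : K.Infinite)
    {F : Set α} (hF : F.Finite) {L : α → Set β} (h : ∀ f ∈ F, (K ∩ L f).Subsingleton) :
    (K \ ⋃ f ∈ F, L f).Infinite := by
  refine (hK.sdiff (hF.biUnion fun f hf => (h f hf).finite)).mono ?_
  rintro p ⟨hpK, hp⟩
  refine ⟨hpK, fun hpL => hp ?_⟩
  obtain ⟨f, hf, hpf⟩ := Set.mem_iUnion₂.mp hpL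
  exact Set.mem_iUnion₂.mpr ⟨f, hf, hpK, hpf⟩

theorem Finset.exists_forall_mem_injOn_infinite {α β : Type*} [Nonempty β] (S : Finset α)
    {T : α → Set β} (hT : ∀ a ∈ S, (T a).Nonempty) :
    ∃ f : α → β, (∀ a ∈ S, f a ∈ T a) ∧ Set.InjOn f {a | a ∈ S ∧ (T a).Infinite} := by
  classical
  induction S using Finset.induction_on with
  | empty => exact ⟨fun _ => Classical.arbitrary β, by simp, by simp⟩
  | insert a S ha ih =>
    obtain ⟨f, hfT, hfinj⟩ := ih fun a h => hT a (mem_insert_of_mem h)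
    obtain ⟨b, hb, hbf⟩ : ∃ b ∈ T a, (T a).Infinite → b ∉ f '' S := by
      by_cases hinf : (T a).Infinite
      · obtain ⟨b, hb, hbf⟩ := hinf.exists_notMem_finite (S.finite_toSet.image f)
        exact ⟨b, hb, fun _ => hbf⟩
      · obtain ⟨b, hb⟩ := hT a (mem_insert_self a S)
        exact ⟨b, hb, fun h => absurd h hinf⟩
    have hf' : ∀ x ∈ S, Function.update f a b x = f x := fun x hx =>
      Function.update_of_ne (ne_of_mem_of_not_mem hx ha) _ _
    refine ⟨Function.update f a b, fun x hx => ?_, fun x ⟨hx, hxinf⟩ y ⟨hy, hyinf⟩ hxy => ?_⟩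
    · rcases mem_insert.mp hx with rfl | hx
      · simpa using hb
      · simpa [hf' x hx] using hfT x hx
    rcases mem_insert.mp hx with rfl | hxS <;> rcases mem_insert.mp hy with rfl | hyS
    · rfl
    · rw [Function.update_self, hf' y hyS] at hxy
      exact absurd ⟨y, hyS, hxy.symm⟩ (hbf hxinf)
    · rw [Function.update_self, hf' x hxS] at hxy
      exact absurd ⟨x, hxS, hxy⟩ (hbf hyinf)
    · rw [hf' x hxS, hf' y hyS] at hxy
      exact hfinj ⟨hxS, hxinf⟩ ⟨hyS, hyinf⟩ hxy

section Positions

open Finset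

def positions {ι β : Type*} (E : Finset (Finset ι)) (L : Finset ι → Set β) (v : ι) : Set β :=
  {p | ∀ e ∈ E, v ∈ e ↔ p ∈ L e}

variable {ι : Type} [DecidableEq ι] {E : Finset (Finset ι)}

open Classical in
theorem positions_nonempty_of_card_eq_two {β : Type*} {L : Finset ι → Set β} {v : ι}
    (htwo : ∀ p, #{e ∈ E | p ∈ L e} ≤ 2)
    (hmeet : ∀ e ∈ E, ∀ f ∈ E, v ∈ e → v ∈ f → (L e ∩ L f).Nonempty)
    (hv : #{e ∈ E | v ∈ e} = 2) : (positions E L v).Nonempty := by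
  obtain ⟨e, f, -, hef⟩ := card_eq_two.mp hv
  have he : e ∈ E ∧ v ∈ e := mem_filter.mp (hef ▸ mem_insert_self e {f})
  have hf : f ∈ E ∧ v ∈ f := mem_filter.mp (hef ▸ mem_insert_of_mem (mem_singleton_self f))
  obtain ⟨p, hpe, hpf⟩ := hmeet e he.1 f hf.1 he.2 hf.2
  have hsub : {e ∈ E | v ∈ e} ⊆ {e ∈ E | p ∈ L e} := by
    rw [hef]
    intro g hg
    rcases mem_insert.mp hg with rfl | hg
    · exact mem_filter.mpr ⟨he.1, hpe⟩
    · exact (mem_singleton.mp hg) ▸ mem_filter.mpr ⟨hf.1, hpf⟩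
  have heq := eq_of_subset_of_card_le hsub (hv ▸ htwo p)
  refine ⟨p, fun g hg => ?_⟩
  simpa [hg] using congrArg (g ∈ ·) heq

theorem positions_slopeLine_infinite_of_card_le_one {s c : Finset ι → ℝ} {v : ι}
    (hinj : Set.InjOn (fun e => slopeLine (s e) (c e)) E) (hv : #{e ∈ E | v ∈ e} ≤ 1) :
    (positions E (fun e => slopeLine (s e) (c e)) v).Infinite := by
  rcases Nat.le_one_iff_eq_zero_or_eq_one.mp hv with h0 | h1
  · have hK : {p : Pt | p.1 = 0}.Infinite :=
      Set.infinite_of_injective_forall_mem (f := fun y : ℝ => ((0 : ℝ), y))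
        (fun _ _ h => congrArg Prod.snd h) fun _ => rfl
    refine (hK.sdiff_biUnion_of_subsingleton E.finite_toSet
      fun f _ => inter_slopeLine_subsingleton_of_fst_eq 0 (s f) (c f)).mono ?_
    rintro p ⟨-, hp⟩ e he
    exact iff_of_false (filter_eq_empty_iff.mp (card_eq_zero.mp h0) he)
      fun hpe => hp (Set.mem_iUnion₂.mpr ⟨e, he, hpe⟩)
  · obtain ⟨e₀, hD⟩ := card_eq_one.mp h1
    have hvD : ∀ e ∈ E, v ∈ e ↔ e = e₀ := fun e he => by
      simpa [he] using congrArg (e ∈ ·) hD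
    have he₀ : e₀ ∈ E := (mem_filter.mp (hD ▸ mem_singleton_self e₀)).1
    have hsub : ∀ f ∈ (E.erase e₀ : Set (Finset ι)),
        (slopeLine (s e₀) (c e₀) ∩ slopeLine (s f) (c f)).Subsingleton := fun f hf =>
      slopeLine_inter_subsingleton fun h =>
        (mem_erase.mp hf).1 (hinj (mem_erase.mp hf).2 he₀ h.symm)
    refine ((infinite_slopeLine (s e₀) (c e₀)).sdiff_biUnion_of_subsingleton
      (E.erase e₀).finite_toSet hsub).mono ?_
    rintro p ⟨hp₀, hp⟩ e he
    rw [hvD e he]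
    by_cases he' : e = e₀
    · subst he'
      exact iff_of_true rfl hp₀
    · exact iff_of_false he' fun hpe => hp (Set.mem_iUnion₂.mpr ⟨e, mem_erase.mpr ⟨he', he⟩, hpe⟩)

end Positions

theorem slopeLine_inter_nonempty_iff_not_disjoint {ι : Type} {E : Finset (Finset ι)}
    {s c : Finset ι → ℝ} (hE : ∀ e ∈ E, e.Nonempty)
    (hs : ∀ e ∈ E, ∀ f ∈ E, s e = s f ↔ e = f ∨ Disjoint e f)
    (hinj : Set.InjOn (fun e => slopeLine (s e) (c e)) E) {e f : Finset ι} (he : e ∈ E)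
    (hf : f ∈ E) :
    (slopeLine (s e) (c e) ∩ slopeLine (s f) (c f)).Nonempty ↔ ¬Disjoint e f := by
  rw [slopeLine_inter_nonempty_iff]
  by_cases hef : e = f
  · subst hef
    exact iff_of_true (Or.inr rfl) (Finset.disjoint_self_iff_empty e |>.not.mpr (hE e he).ne_empty)
  · have hc : Disjoint e f → c e ≠ c f := fun hd hcef =>
      hef (hinj he hf (slopeLine_inj.mpr ⟨(hs e he f hf).mpr (Or.inr hd), hcef⟩))
    rw [ne_eq, hs e he f hf]
    tauto

section Assembly

open Finset

variable {ι : Type} [DecidableEq ι]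

theorem eq_of_forall_mem_iff_of_two_le_card {E : Finset (Finset ι)}
    (hlin : ∀ e ∈ E, ∀ e' ∈ E, e ≠ e' → #(e ∩ e') ≤ 1) {u v : ι}
    (huv : ∀ e ∈ E, u ∈ e ↔ v ∈ e) (hu : 2 ≤ #{e ∈ E | u ∈ e}) : u = v := by
  obtain ⟨e, he, f, hf, hef⟩ := one_lt_card.mp hu
  rw [mem_filter] at he hf
  exact card_le_one.mp (hlin e he.1 f hf.1 hef) u (mem_inter.mpr ⟨he.2, hf.2⟩) v
    (mem_inter.mpr ⟨(huv e he.1).mp he.2, (huv f hf.1).mp hf.2⟩)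

theorem FinHypergraph.exists_crossingFree_lineRep (H : FinHypergraph ι)
    (hlin : ∀ e ∈ H.E, ∀ e' ∈ H.E, e ≠ e' → #(e ∩ e') ≤ 1)
    (hdeg : ∀ v ∈ H.V, #{e ∈ H.E | v ∈ e} ≤ 2)
    (hE : ∀ e₁ ∈ H.E, ∀ e₂ ∈ H.E, ∀ e₃ ∈ H.E, e₁ ≠ e₂ → e₁ ≠ e₃ → e₂ ≠ e₃ →
        e₁ ∩ e₂ = ∅ → e₂ ∩ e₃ = ∅ → e₁ ∩ e₃ = ∅) :
    ∃ R : LineRep H, R.CrossingFree := by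
  obtain ⟨k, hk⟩ := H.E.finite_toSet.exists_eq_iff_of_equivalence
    (r := fun e f => e = f ∨ Disjoint e f) (equivalence_eq_or_disjoint hE)
  set s : Finset ι → ℝ := fun e => (k e : ℝ)
  obtain ⟨c, hinj, htwo⟩ := exists_intercepts s H.E
  set L : Finset ι → Set Pt := fun e => slopeLine (s e) (c e)
  have hmeet : ∀ e ∈ H.E, ∀ f ∈ H.E, (L e ∩ L f).Nonempty ↔ ¬Disjoint e f :=
    fun e he f hf => slopeLine_inter_nonempty_iff_not_disjoint H.edge_nonempty
      (fun e he f hf => Nat.cast_inj.trans (hk e he f hf)) hinj he hf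
  have hpos : ∀ v ∈ H.V, (positions H.E L v).Nonempty := fun v hv =>
    (hdeg v hv).lt_or_eq.elim
      (fun hlt => (positions_slopeLine_infinite_of_card_le_one hinj (by omega)).nonempty)
      (positions_nonempty_of_card_eq_two htwo fun e he f hf hve hvf =>
        (hmeet e he f hf).mpr (not_disjoint_iff.mpr ⟨v, hve, hvf⟩))
  obtain ⟨α, hα, hαinj⟩ := H.V.exists_forall_mem_injOn_infinite hpos
  refine ⟨⟨α, L, fun u hu v hv huv => ?_, hinj, fun e _ => isLine_slopeLine _ _, hα⟩,
    fun e he f hf => (hmeet e he f hf).trans not_disjoint_iff⟩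
  have hsame : ∀ e ∈ H.E, u ∈ e ↔ v ∈ e := fun e he =>
    (hα u hu e he).trans (huv ▸ (hα v hv e he).symm)
  by_cases hu2 : 2 ≤ #{e ∈ H.E | u ∈ e}
  · exact eq_of_forall_mem_iff_of_two_le_card hlin hsame hu2
  · have hinf := positions_slopeLine_infinite_of_card_le_one (v := u) hinj (by omega)
    have hpos_eq : positions H.E L u = positions H.E L v :=
      Set.ext fun p => forall₂_congr fun e he => by rw [hsame e he]
    exact hαinj ⟨hu, hinf⟩ ⟨hv, hpos_eq ▸ hinf⟩ huv

end Assembly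

theorem stmt13 {ι : Type} [DecidableEq ι] (H : FinHypergraph ι)
    (hlin : ∀ e ∈ H.E, ∀ e' ∈ H.E, e ≠ e' → (e ∩ e').card ≤ 1)
    (hdeg : ∀ v ∈ H.V, (H.E.filter (fun e => v ∈ e)).card ≤ 2) :
    (∃ R : LineRep H, R.CrossingFree) ↔
      ∀ e₁ ∈ H.E, ∀ e₂ ∈ H.E, ∀ e₃ ∈ H.E, e₁ ≠ e₂ → e₁ ≠ e₃ → e₂ ≠ e₃ →
        e₁ ∩ e₂ = ∅ → e₂ ∩ e₃ = ∅ → e₁ ∩ e₃ = ∅ :=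
  ⟨fun ⟨_, hR⟩ _ he₁ _ he₂ _ he₃ _ h₁₃ _ => hR.inter_eq_empty_trans he₁ he₂ he₃ h₁₃,
    H.exists_crossingFree_lineRep hlin hdeg⟩
end

section
/- Let H=(V,E) be a linear hypergraph in which every vertex has degree at most 2, with hyperedges enumerated e1,…,en. Suppose there exists a permutation π of {1,…,n} such that for all 1 ≤ i < j ≤ n, e_i ∩ e_j ≠ ∅ if and only if π(i) > π(j) (i.e., the hyperedge intersection graph of H is a permutation graph). Then H admits a strict crossing-free segment representation. -/
set_option maxRecDepth 8000

/-!
Draw the edge `e i` as the segment from `(i, 0)` to `(t i, 1)` with `π i ≤ t i < π i + 1`. For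
`i < j` the two segments meet iff `t j < t i`, i.e. iff `π j < π i`, i.e. iff the edges meet, and
a generic choice of the `t i` makes no three segments concurrent.
A vertex is placed according to the set of edges through it, which has at most two elements: a
vertex of degree two goes to the crossing of its two segments (by linearity no other vertex
needs that point), a vertex of degree one to a point of its segment on no other segment, an
isolated vertex to a point on no segment; the last two kinds of target are infinite sets.
-/

open Set Function

theorem Set.Finite.exists_injOn_of_encard_fiber_le {α β κ : Type*} [Nonempty β] {s : Set α}
    (hs : s.Finite) {f : α → κ} {g : β → κ}
    (h : ∀ c, {x ∈ s | f x = c}.encard ≤ (g ⁻¹' {c}).encard) :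
    ∃ φ : α → β, InjOn φ s ∧ ∀ x ∈ s, g (φ x) = f x := by
  choose φ hφ hinj using fun c => (hs.sep (f · = c)).exists_injOn_of_encard_le (h c)
  have hg : ∀ x ∈ s, g (φ (f x) x) = f x := fun x hx => hφ (f x) ⟨hx, rfl⟩
  refine ⟨fun x => φ (f x) x, fun x hx y hy hxy => ?_, hg⟩
  have hf : f y = f x := by rw [← hg x hx, ← hg y hy]; exact congrArg g hxy.symm
  exact hinj (f x) ⟨hx, rfl⟩ ⟨hy, hf⟩ (by simpa only [hf] using hxy)

open Classical in
noncomputable def memberIndices {κ P : Type*} [Fintype κ] (S : κ → Set P) (p : P) : Finset κ :=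
  {i | p ∈ S i}

@[simp]
theorem mem_memberIndices {κ P : Type*} [Fintype κ] {S : κ → Set P} {p : P} {i : κ} :
    i ∈ memberIndices S p ↔ p ∈ S i := by
  simp [memberIndices]

structure IsSimpleArrangement {κ P : Type*} (S : κ → Set P) : Prop where
  infinite : ∀ i, (S i).Infinite
  inter_subsingleton : ∀ i j, i ≠ j → (S i ∩ S j).Subsingleton
  inter_inter_eq_empty : ∀ i j k, i ≠ j → j ≠ k → i ≠ k → S i ∩ S j ∩ S k = ∅
  compl_iUnion_infinite : (⋃ i, S i)ᶜ.Infinite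

namespace IsSimpleArrangement

variable {κ P : Type*} {S : κ → Set P}

theorem injective (hS : IsSimpleArrangement S) : Injective S := by
  intro i j hij
  by_contra hne
  have := hS.inter_subsingleton i j hne
  rw [hij, inter_self] at this
  exact hS.infinite j this.finite

variable [Fintype κ]

theorem memberIndices_eq_pair [DecidableEq κ] (hS : IsSimpleArrangement S) {i j : κ} (hij : i ≠ j)
    {p : P} (hpi : p ∈ S i) (hpj : p ∈ S j) : memberIndices S p = {i, j} := by
  ext k
  simp only [mem_memberIndices, Finset.mem_insert, Finset.mem_singleton]
  refine ⟨fun hpk => ?_, by rintro (rfl | rfl) <;> assumption⟩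
  by_contra! hk
  have : p ∈ S i ∩ S j ∩ S k := ⟨⟨hpi, hpj⟩, hpk⟩
  rwa [hS.inter_inter_eq_empty i j k hij hk.2.symm hk.1.symm] at this

theorem infinite_memberIndices_preimage_empty (hS : IsSimpleArrangement S) :
    (memberIndices S ⁻¹' {∅}).Infinite := by
  convert hS.compl_iUnion_infinite using 1
  ext p
  simp [Finset.eq_empty_iff_forall_notMem]

theorem infinite_memberIndices_preimage_singleton (hS : IsSimpleArrangement S) (i : κ) :
    (memberIndices S ⁻¹' {{i}}).Infinite := by
  have hfin : (⋃ j ∈ ({i}ᶜ : Set κ), S i ∩ S j).Finite :=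
    (toFinite _).biUnion fun j hj => (hS.inter_subsingleton i j (Ne.symm hj)).finite
  refine ((hS.infinite i).sdiff hfin).mono fun p hp => ?_
  obtain ⟨hpi, hp⟩ := hp
  simp only [mem_preimage, mem_singleton_iff, Finset.eq_singleton_iff_unique_mem, mem_memberIndices]
  simp only [mem_iUnion, not_exists] at hp
  exact ⟨hpi, fun j hpj => by_contra fun hj => hp j hj ⟨hpi, hpj⟩⟩

theorem infinite_memberIndices_preimage_of_card_le_one (hS : IsSimpleArrangement S)
    {c : Finset κ} (hc : c.card ≤ 1) : (memberIndices S ⁻¹' {c}).Infinite := by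
  rcases Nat.le_one_iff_eq_zero_or_eq_one.1 hc with hc | hc
  · rw [Finset.card_eq_zero.1 hc]
    exact hS.infinite_memberIndices_preimage_empty
  · obtain ⟨i, rfl⟩ := Finset.card_eq_one.1 hc
    exact hS.infinite_memberIndices_preimage_singleton i

variable {ι : Type*} {e : κ → Set ι} {V : Set ι}

theorem encard_memberIndices_fiber_le (hS : IsSimpleArrangement S)
    (hlin : ∀ i j, i ≠ j → (e i ∩ e j).Subsingleton)
    (hdeg : ∀ v ∈ V, (memberIndices e v).card ≤ 2)
    (hmeet : ∀ i j, i ≠ j → (e i ∩ e j).Nonempty → (S i ∩ S j).Nonempty) (c : Finset κ) :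
    {v ∈ V | memberIndices e v = c}.encard ≤ (memberIndices S ⁻¹' {c}).encard := by
  classical
  rcases {v ∈ V | memberIndices e v = c}.eq_empty_or_nonempty with h | ⟨v, hvV, rfl⟩
  · simp [h]
  rcases (hdeg v hvV).lt_or_eq with hlt | h2
  · rw [(hS.infinite_memberIndices_preimage_of_card_le_one (Nat.lt_succ_iff.1 hlt)).encard_eq]
    exact le_top
  obtain ⟨i, j, hij, hc⟩ := Finset.card_eq_two.1 h2
  have hmem : ∀ w, memberIndices e w = {i, j} → w ∈ e i ∩ e j := fun w hw =>
    ⟨mem_memberIndices.1 (by simp [hw]), mem_memberIndices.1 (by simp [hw])⟩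
  obtain ⟨p, hpi, hpj⟩ := hmeet i j hij ⟨v, hmem v hc⟩
  calc {w ∈ V | memberIndices e w = memberIndices e v}.encard ≤ 1 :=
        encard_le_one_iff.2 fun w w' hw hw' =>
          hlin i j hij (hmem w (hw.2.trans hc)) (hmem w' (hw'.2.trans hc))
    _ ≤ (memberIndices S ⁻¹' {memberIndices e v}).encard :=
        one_le_encard_iff_nonempty.2 ⟨p, by simp [hc, hS.memberIndices_eq_pair hij hpi hpj]⟩

theorem exists_injOn_forall_mem_iff (hS : IsSimpleArrangement S) (hV : V.Finite)
    (hlin : ∀ i j, i ≠ j → (e i ∩ e j).Subsingleton)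
    (hdeg : ∀ v ∈ V, (memberIndices e v).card ≤ 2)
    (hmeet : ∀ i j, i ≠ j → (e i ∩ e j).Nonempty → (S i ∩ S j).Nonempty) :
    ∃ α : ι → P, InjOn α V ∧ ∀ v ∈ V, ∀ i, v ∈ e i ↔ α v ∈ S i := by
  have : Nonempty P := hS.compl_iUnion_infinite.nonempty.to_subtype.map Subtype.val
  obtain ⟨α, hinj, hα⟩ :=
    hV.exists_injOn_of_encard_fiber_le (hS.encard_memberIndices_fiber_le hlin hdeg hmeet)
  refine ⟨α, hinj, fun v hv i => ?_⟩
  rw [← mem_memberIndices (S := e), ← hα v hv, mem_memberIndices]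

end IsSimpleArrangement

theorem IsSegment.infinite {S : Set Pt} (h : IsSegment S) : S.Infinite := by
  obtain ⟨a, b, hab, rfl⟩ := h
  rw [segment_eq_image_lineMap]
  exact (Icc_infinite zero_lt_one).image (AffineMap.lineMap_injective ℝ hab).injOn

def stripSegment (a b : ℝ) : Set Pt := segment ℝ (a, 0) (b, 1)

section StripSegment

variable {a b a' b' : ℝ} {p : Pt}

theorem mem_stripSegment :
    p ∈ stripSegment a b ↔ p.2 ∈ Icc (0 : ℝ) 1 ∧ p.1 = (1 - p.2) * a + p.2 * b := by
  rw [stripSegment, segment_eq_image]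
  constructor
  · rintro ⟨y, hy, rfl⟩
    simpa [Prod.smul_mk] using hy
  · rintro ⟨hy, hp⟩
    exact ⟨p.2, hy, by simp [Prod.smul_mk, ← hp]⟩

theorem isSegment_stripSegment (a b : ℝ) : IsSegment (stripSegment a b) :=
  ⟨(a, 0), (b, 1), by simp, rfl⟩

theorem notMem_stripSegment_of_snd_neg (hp : p.2 < 0) : p ∉ stripSegment a b :=
  fun h => hp.not_ge (mem_stripSegment.1 h).1.1

theorem mem_stripSegment_iff_of_mem (hp : p ∈ stripSegment a b) :
    p ∈ stripSegment a' b' ↔ (1 - p.2) * (a - a') + p.2 * (b - b') = 0 := by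
  rw [mem_stripSegment] at hp ⊢
  constructor
  · rintro ⟨-, h⟩
    linarith [hp.2]
  · intro h
    exact ⟨hp.1, by linarith [hp.2]⟩

theorem stripSegment_inter_subsingleton (ha : a ≠ a') :
    (stripSegment a b ∩ stripSegment a' b').Subsingleton := by
  rintro p ⟨hp, hp'⟩ q ⟨hq, hq'⟩
  rw [mem_stripSegment_iff_of_mem hp] at hp'
  rw [mem_stripSegment_iff_of_mem hq] at hq'
  have hd : a - a' ≠ 0 := sub_ne_zero.2 ha
  have h2 : p.2 = q.2 := by
    have : (p.2 - q.2) * ((b - b') - (a - a')) = 0 := by linear_combination hp' - hq'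
    rcases mul_eq_zero.1 this with h | h
    · linarith
    · exact absurd (by linear_combination hp' - p.2 * h) hd
  exact Prod.ext (by rw [(mem_stripSegment.1 hp).2, (mem_stripSegment.1 hq).2, h2]) h2

theorem stripSegment_inter_nonempty_iff (ha : a < a') :
    (stripSegment a b ∩ stripSegment a' b').Nonempty ↔ b' ≤ b := by
  constructor
  · rintro ⟨p, hp, hp'⟩
    rw [mem_stripSegment_iff_of_mem hp] at hp'
    obtain ⟨h0, h1⟩ := (mem_stripSegment.1 hp).1
    by_contra! hb
    nlinarith [mul_nonneg (sub_nonneg.2 h1) (sub_pos.2 ha).le, mul_nonneg h0 (sub_pos.2 hb).le,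
      mul_pos (sub_pos.2 ha) (sub_pos.2 hb)]
  · intro hb
    set y := (a' - a) / ((a' - a) + (b - b'))
    have hy : y * ((a' - a) + (b - b')) = a' - a := div_mul_cancel₀ _ (by linarith)
    have hp : (((1 - y) * a + y * b, y) : Pt) ∈ stripSegment a b :=
      mem_stripSegment.2 ⟨⟨div_nonneg (by linarith) (by linarith),
        (div_le_one (by linarith)).2 (by linarith)⟩, rfl⟩
    exact ⟨_, hp, (mem_stripSegment_iff_of_mem hp).2 (by linear_combination hy)⟩

/-- The lines through `(aₖ, 0)` and `(bₖ, 1)` are concurrent only if the dual points `(aₖ, bₖ)`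
are collinear. -/
theorem collinear_of_mem_stripSegment {a₁ b₁ a₂ b₂ a₃ b₃ : ℝ} (h₁ : p ∈ stripSegment a₁ b₁)
    (h₂ : p ∈ stripSegment a₂ b₂) (h₃ : p ∈ stripSegment a₃ b₃) :
    (a₁ - a₂) * (b₁ - b₃) = (a₁ - a₃) * (b₁ - b₂) := by
  rw [mem_stripSegment_iff_of_mem h₁] at h₂ h₃
  linear_combination (b₁ - b₃ - (a₁ - a₃)) * h₂ - (b₁ - b₂ - (a₁ - a₂)) * h₃

end StripSegment

/-- Lifting the points `(x i, c i)` along the parabola direction by a generic `δ` puts them in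
general position, because three points of the parabola `y = x²` are never collinear. -/
theorem exists_perturbation_not_collinear {κ : Type*} [Finite κ] {x : κ → ℝ} (hx : Injective x)
    (c : κ → ℝ) {ε : ℝ} (hε : 0 < ε) :
    ∃ δ ∈ Ioo 0 ε, ∀ i j k, i ≠ j → j ≠ k → i ≠ k →
      (x i - x j) * (c i + δ * x i ^ 2 - (c k + δ * x k ^ 2)) ≠
        (x i - x k) * (c i + δ * x i ^ 2 - (c j + δ * x j ^ 2)) := by
  let root (i j k : κ) : ℝ := -((x i - x j) * (c i - c k) - (x i - x k) * (c i - c j)) /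
    ((x i - x j) * (x i - x k) * (x k - x j))
  obtain ⟨δ, hδ, hδroot⟩ := ((Ioo_infinite hε).sdiff
    (finite_range fun t : κ × κ × κ => root t.1 t.2.1 t.2.2)).nonempty
  refine ⟨δ, hδ, fun i j k hij hjk hik h => hδroot ⟨(i, j, k), ?_⟩⟩
  have hB : (x i - x j) * (x i - x k) * (x k - x j) ≠ 0 := by
    simp [sub_eq_zero, hx.ne hij, hx.ne hik, hx.ne hjk.symm]
  simp only [root]
  rw [div_eq_iff hB]
  linear_combination -h

theorem exists_stripSegments_of_perm {n : ℕ} (π : Equiv.Perm (Fin n)) :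
    ∃ S : Fin n → Set Pt, (∀ i, IsSegment (S i)) ∧ IsSimpleArrangement S ∧
      ∀ i j, i < j → ((S i ∩ S j).Nonempty ↔ π j < π i) := by
  obtain ⟨δ, ⟨hδ0, hδ1⟩, hgen⟩ := exists_perturbation_not_collinear
    (x := fun i : Fin n => (i : ℝ)) (fun i j h => Fin.ext (Nat.cast_injective h))
    (fun i => (π i : ℝ))
    (ε := ((n : ℝ) ^ 2 + 1)⁻¹) (by positivity)
  set t : Fin n → ℝ := fun i => π i + δ * (i : ℝ) ^ 2
  have ht : ∀ i, (π i : ℝ) ≤ t i ∧ t i < π i + 1 := by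
    intro i
    have hi : (i : ℝ) ^ 2 ≤ (n : ℝ) ^ 2 := by gcongr; exact_mod_cast i.is_lt.le
    have : ((n : ℝ) ^ 2 + 1) * δ < 1 := (lt_inv_mul_iff₀ (by positivity)).1 (by rwa [mul_one])
    constructor <;> nlinarith
  have ht_lt : ∀ i j, π j < π i → t j < t i := fun i j h => by
    have : (π j : ℝ) + 1 ≤ π i := by exact_mod_cast Fin.val_add_one_le_of_lt h
    linarith [(ht i).1, (ht j).2]
  refine ⟨fun i => stripSegment i (t i), fun i => isSegment_stripSegment _ _, ⟨?_, ?_, ?_, ?_⟩, ?_⟩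
  · exact fun i => (isSegment_stripSegment _ _).infinite
  · exact fun i j hij => stripSegment_inter_subsingleton (by simpa [Fin.val_inj] using hij)
  · refine fun i j k hij hjk hik => eq_empty_of_forall_notMem fun p ⟨⟨hi, hj⟩, hk⟩ => ?_
    exact hgen i j k hij hjk hik (collinear_of_mem_stripSegment hi hj hk)
  · refine ((infinite_range_of_injective fun r s h => congrArg Prod.fst h :
      (range fun r : ℝ => ((r, -1) : Pt)).Infinite)).mono ?_
    rintro _ ⟨r, rfl⟩
    simpa using fun i => notMem_stripSegment_of_snd_neg (by norm_num)
  · intro i j hij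
    rw [stripSegment_inter_nonempty_iff (by exact_mod_cast hij)]
    refine ⟨fun h => ?_, fun h => (ht_lt i j h).le⟩
    refine (π.injective.ne hij.ne').lt_of_le ?_
    exact le_of_not_gt fun h' => h.not_gt (ht_lt j i h')

namespace FinHypergraph

variable {ι κ : Type} [DecidableEq ι] [Fintype κ]

theorem exists_segmentRep_strict_crossingFree (H : FinHypergraph ι)
    (hlin : ∀ e ∈ H.E, ∀ e' ∈ H.E, e ≠ e' → (e ∩ e').card ≤ 1)
    (hdeg : ∀ v ∈ H.V, (H.E.filter (fun e => v ∈ e)).card ≤ 2)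
    {e : κ → Finset ι} (he : Injective e) (hE : H.E = Finset.univ.image e)
    {S : κ → Set Pt} (hseg : ∀ i, IsSegment (S i)) (hS : IsSimpleArrangement S)
    (hmeet : ∀ i j, i ≠ j → ((S i ∩ S j).Nonempty ↔ (e i ∩ e j).Nonempty)) :
    ∃ R : SegmentRep H, R.Strict ∧ R.CrossingFree := by
  have hmemE : ∀ i, e i ∈ H.E := fun i => hE ▸ Finset.mem_image_of_mem e (Finset.mem_univ i)
  have hlin' : ∀ i j, i ≠ j → ((e i : Set ι) ∩ e j).Subsingleton := fun i j hij x hx y hy =>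
    Finset.card_le_one.1 (hlin _ (hmemE i) _ (hmemE j) (he.ne hij)) x (by simpa using hx) y
      (by simpa using hy)
  have hdeg' : ∀ v ∈ H.V, (memberIndices (fun i => (e i : Set ι)) v).card ≤ 2 := fun v hv =>
    (Finset.card_le_card_of_injOn e (fun i hi => by simpa [hmemE i] using hi)
      he.injOn).trans (hdeg v hv)
  obtain ⟨α, hinj, hα⟩ := hS.exists_injOn_forall_mem_iff H.V.finite_toSet hlin' hdeg'
    fun i j hij hv => (hmeet i j hij).2 (by simpa [← Finset.coe_inter] using hv)
  set β : Finset ι → Set Pt := extend e S fun _ => ∅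
  have hβ : ∀ i, β (e i) = S i := he.extend_apply S _
  have hE' : ∀ {p : Finset ι → Prop}, (∀ s ∈ H.E, p s) ↔ ∀ i, p (e i) := by simp [hE]
  refine ⟨⟨α, β, hinj, ?_, hE'.2 fun i => hβ i ▸ hseg i, fun v hv => hE'.2 fun i => ?_⟩, ?_, ?_⟩
  · rintro _ hs _ hs' h
    rw [Finset.mem_coe, hE, Finset.mem_image] at hs hs'
    obtain ⟨⟨i, -, rfl⟩, ⟨j, -, rfl⟩⟩ := And.intro hs hs'
    rw [hβ, hβ] at h
    rw [hS.injective h]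
  · rw [hβ, ← hα v hv i, Finset.mem_coe]
  · refine hE'.2 fun i => hE'.2 fun j hij => ?_
    dsimp only
    rw [hβ, hβ]
    exact hS.inter_subsingleton i j (fun h => hij (congrArg e h))
  · refine hE'.2 fun i => hE'.2 fun j => ?_
    dsimp only
    rw [hβ, hβ]
    rcases eq_or_ne i j with rfl | hij
    · rw [inter_self]
      obtain ⟨v, hv⟩ := H.edge_nonempty _ (hmemE i)
      exact iff_of_true (hS.infinite i).nonempty ⟨v, hv, hv⟩
    · simp [hmeet i j hij, Finset.Nonempty]

end FinHypergraph

theorem stmt14 {ι : Type} [DecidableEq ι] (H : FinHypergraph ι)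
    (hlin : ∀ e ∈ H.E, ∀ e' ∈ H.E, e ≠ e' → (e ∩ e').card ≤ 1)
    (hdeg : ∀ v ∈ H.V, (H.E.filter (fun e => v ∈ e)).card ≤ 2)
    (n : ℕ) (e : Fin n → Finset ι) (he : Function.Injective e)
    (hE : H.E = Finset.univ.image e)
    (π : Equiv.Perm (Fin n))
    (hπ : ∀ i j : Fin n, i < j → ((e i ∩ e j).Nonempty ↔ π j < π i)) :
    ∃ R : SegmentRep H, R.Strict ∧ R.CrossingFree := by
  obtain ⟨S, hseg, hS, hcross⟩ := exists_stripSegments_of_perm π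
  refine H.exists_segmentRep_strict_crossingFree hlin hdeg he hE hseg hS fun i j hij => ?_
  rcases hij.lt_or_gt with h | h
  · rw [hcross i j h, hπ i j h]
  · rw [inter_comm, Finset.inter_comm, hcross j i h, hπ j i h]
end

section
/- Let H be the hypergraph on the 18 pairwise distinct vertices p1,…,p9, p1',…,p9' whose hyperedges are the eight Pappus-gadget hyperedges on p1,…,p9, the eight Pappus-gadget hyperedges on p1',…,p9', together with the two hyperedges {p7', p8, p9} and {p7, p8', p9'}. Then H has no line representation. -/
set_option maxRecDepth 8000

/-- Two Pappus gadgets joined by two extra hyperedges.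
Vertex `i : Fin 18` stands for `p(i+1)` if `i ≤ 8` and for `p(i-8)'` if `i ≥ 9`.
The anchors of the first gadget are `p7 = 6, p8 = 7, p9 = 8`, those of the second
are `p7' = 15, p8' = 16, p9' = 17`. -/
def twoPappus : FinHypergraph (Fin 18) where
  V := Finset.univ
  E := {({0, 1, 2} : Finset (Fin 18)), {3, 4, 5}, {0, 3, 7}, {0, 4, 8},
        {1, 3, 6}, {1, 5, 8}, {2, 4, 6}, {2, 5, 7},
        {9, 10, 11}, {12, 13, 14}, {9, 12, 16}, {9, 13, 17},
        {10, 12, 15}, {10, 14, 17}, {11, 13, 15}, {11, 14, 16},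
        {15, 7, 8}, {6, 16, 17}}
  edge_nonempty := by
    intro e he
    fin_cases he <;> exact Finset.insert_nonempty _ _
  edge_subset := fun e _ => Finset.subset_univ e

/-!
In a line representation of a Pappus gadget, the points `p₁, p₂, p₃` and `p₄, p₅, p₆` lie on two
lines and `p₇, p₈, p₉` are the three cross intersections, so Pappus's theorem makes `p₇, p₈, p₉`
collinear. In the doubled gadget the line of `{p₇', p₈, p₉}` therefore passes through `p₇`,
although `p₇` is not in that hyperedge.

Pappus's theorem is proved in coordinates: an affine change of frame sends two points of the
first line to `(0, 0)`, `(1, 0)` and a point of the second line to `(0, 1)`; the three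
intersection points are then explicit rational functions of four parameters, and their
collinearity is a rational identity.
-/

section Coordinates

variable {K : Type*} [Field K]

def wedge (u v : K × K) : K := u.1 * v.2 - u.2 * v.1

def cross (p q r : K × K) : K := wedge (q - p) (r - p)

lemma cross_rotate (p q r : K × K) : cross p q r = cross q r p := by
  simp only [cross, wedge, Prod.fst_sub, Prod.snd_sub]
  ring

lemma exists_eq_add_smul_of_cross_eq_zero {p q r : K × K} (h : cross p q r = 0) (hpq : p ≠ q) :
    ∃ t : K, r = p + t • (q - p) := by
  simp only [cross, wedge, Prod.fst_sub, Prod.snd_sub] at h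
  rcases ne_or_eq p.1 q.1 with h₁ | h₁
  · have hd : q.1 - p.1 ≠ 0 := sub_ne_zero.mpr h₁.symm
    refine ⟨(r.1 - p.1) / (q.1 - p.1), Prod.ext ?_ ?_⟩ <;>
      simp only [Prod.fst_add, Prod.snd_add, Prod.smul_fst, Prod.smul_snd, Prod.fst_sub,
        Prod.snd_sub, smul_eq_mul] <;>
      field_simp
    · ring
    · linear_combination h
  · have hd : q.2 - p.2 ≠ 0 := sub_ne_zero.mpr fun h₂ => hpq (Prod.ext h₁ h₂.symm)
    refine ⟨(r.2 - p.2) / (q.2 - p.2), Prod.ext ?_ ?_⟩ <;>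
      simp only [Prod.fst_add, Prod.snd_add, Prod.smul_fst, Prod.smul_snd, Prod.fst_sub,
        Prod.snd_sub, smul_eq_mul] <;>
      field_simp
    · rw [h₁] at h ⊢
      linear_combination -h
    · ring

/-- Two lines through a common point `c` are parallel only if they coincide. -/
lemma wedge_sub_ne_zero {p q r s c : K × K} (h₁ : cross p q c = 0) (h₂ : cross r s c = 0)
    (hrs : r ≠ s) (hr : cross p q r ≠ 0) : wedge (q - p) (s - r) ≠ 0 := by
  intro hw
  simp only [cross, wedge, Prod.fst_sub, Prod.snd_sub] at h₁ h₂ hr hw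
  apply hr
  rcases ne_or_eq r.1 s.1 with hs | hs
  · have hd : s.1 - r.1 ≠ 0 := sub_ne_zero.mpr hs.symm
    refine (mul_eq_zero.mp ?_).resolve_right hd
    linear_combination (s.1 - r.1) * h₁ - (c.1 - r.1) * hw - (q.1 - p.1) * h₂
  · have hd : s.2 - r.2 ≠ 0 := sub_ne_zero.mpr fun h => hrs (Prod.ext hs h.symm)
    refine (mul_eq_zero.mp ?_).resolve_right hd
    linear_combination (s.2 - r.2) * h₁ - (c.2 - r.2) * hw - (q.2 - p.2) * h₂

lemma eq_add_smul_of_cross_eq_zero {p q r s x : K × K} (h₁ : cross p q x = 0)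
    (h₂ : cross r s x = 0) (hw : wedge (q - p) (s - r) ≠ 0) :
    x = p + (wedge (r - p) (s - r) / wedge (q - p) (s - r)) • (q - p) := by
  simp only [cross, wedge, Prod.fst_sub, Prod.snd_sub] at h₁ h₂ hw ⊢
  ext
  · simp only [Prod.fst_add, Prod.smul_fst, Prod.fst_sub, smul_eq_mul]
    rw [← sub_eq_iff_eq_add', div_mul_eq_mul_div, eq_div_iff hw]
    linear_combination (s.1 - r.1) * h₁ - (q.1 - p.1) * h₂
  · simp only [Prod.snd_add, Prod.smul_snd, Prod.snd_sub, smul_eq_mul]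
    rw [← sub_eq_iff_eq_add', div_mul_eq_mul_div, eq_div_iff hw]
    linear_combination (s.2 - r.2) * h₁ - (q.2 - p.2) * h₂

/-- Affine coordinates of `x` in the frame with origin `o` and axes `a - o`, `b - o`. -/
def frameCoords (o a b x : K × K) : K × K :=
  (cross o x b / cross o a b, cross o a x / cross o a b)

section frameCoords

variable {o a b : K × K}

lemma frameCoords_origin : frameCoords o a b o = 0 := by
  simp [frameCoords, cross, wedge]

lemma frameCoords_left (h : cross o a b ≠ 0) : frameCoords o a b a = (1, 0) :=
  Prod.ext (div_self h) (by simp [frameCoords, cross, wedge, mul_comm])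

lemma frameCoords_right (h : cross o a b ≠ 0) : frameCoords o a b b = (0, 1) :=
  Prod.ext (by simp [frameCoords, cross, wedge, mul_comm]) (div_self h)

lemma frameCoords_add_smul_sub (p q : K × K) (t : K) :
    frameCoords o a b (p + t • (q - p)) =
      frameCoords o a b p + t • (frameCoords o a b q - frameCoords o a b p) := by
  simp only [frameCoords, cross, wedge]
  ext <;> simp only [Prod.fst_add, Prod.snd_add, Prod.smul_fst, Prod.smul_snd, Prod.fst_sub,
    Prod.snd_sub, smul_eq_mul] <;> ring

lemma wedge_frameCoords_sub (h : cross o a b ≠ 0) (p q r s : K × K) :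
    wedge (frameCoords o a b q - frameCoords o a b p) (frameCoords o a b s - frameCoords o a b r) =
      wedge (q - p) (s - r) / cross o a b := by
  simp only [frameCoords]
  generalize hD : cross o a b = D at h ⊢
  simp only [wedge, Prod.fst_sub, Prod.snd_sub]
  field_simp
  subst hD
  simp only [cross, wedge, Prod.fst_sub, Prod.snd_sub]
  ring

lemma cross_frameCoords (h : cross o a b ≠ 0) (p q r : K × K) :
    cross (frameCoords o a b p) (frameCoords o a b q) (frameCoords o a b r) =
      cross p q r / cross o a b :=
  wedge_frameCoords_sub h p q p r

end frameCoords

lemma cross_eq_zero_of_pappus_normalized {a₁ a₂ a₃ b₁ b₂ b₃ c₁₂ c₁₃ c₂₃ : K × K} {l m : K}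
    (ha₁ : a₁ = 0) (ha₂ : a₂ = (1, 0)) (hb₁ : b₁ = (0, 1))
    (ha₃ : a₃ = a₁ + l • (a₂ - a₁)) (hb₃ : b₃ = b₁ + m • (b₂ - b₁))
    (h₁₂ : cross a₁ b₂ c₁₂ = 0) (h₂₁ : cross a₂ b₁ c₁₂ = 0)
    (h₁₃ : cross a₁ b₃ c₁₃ = 0) (h₃₁ : cross a₃ b₁ c₁₃ = 0)
    (h₂₃ : cross a₂ b₃ c₂₃ = 0) (h₃₂ : cross a₃ b₂ c₂₃ = 0)
    (hw₁₂ : wedge (b₂ - a₁) (b₁ - a₂) ≠ 0) (hw₁₃ : wedge (b₃ - a₁) (b₁ - a₃) ≠ 0)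
    (hw₂₃ : wedge (b₃ - a₂) (b₂ - a₃) ≠ 0) :
    cross c₁₂ c₁₃ c₂₃ = 0 := by
  rw [eq_add_smul_of_cross_eq_zero h₁₂ h₂₁ hw₁₂, eq_add_smul_of_cross_eq_zero h₁₃ h₃₁ hw₁₃,
    eq_add_smul_of_cross_eq_zero h₂₃ h₃₂ hw₂₃]
  -- `field_simp` only recognises the denominators as nonzero while they are atoms.
  generalize hW₁₂ : wedge (b₂ - a₁) (b₁ - a₂) = W₁₂ at hw₁₂ ⊢
  generalize hW₁₃ : wedge (b₃ - a₁) (b₁ - a₃) = W₁₃ at hw₁₃ ⊢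
  generalize hW₂₃ : wedge (b₃ - a₂) (b₂ - a₃) = W₂₃ at hw₂₃ ⊢
  simp only [cross, wedge, Prod.fst_add, Prod.snd_add, Prod.smul_fst, Prod.smul_snd,
    Prod.fst_sub, Prod.snd_sub, smul_eq_mul]
  field_simp
  subst hW₁₂ hW₁₃ hW₂₃ ha₁ ha₂ hb₁ ha₃ hb₃
  simp only [wedge, Prod.fst_add, Prod.snd_add, Prod.smul_fst, Prod.smul_snd,
    Prod.fst_sub, Prod.snd_sub, smul_eq_mul, Prod.fst_zero, Prod.snd_zero]
  ring

theorem cross_eq_zero_of_pappus {a₁ a₂ a₃ b₁ b₂ b₃ c₁₂ c₁₃ c₂₃ : K × K}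
    (ha : cross a₁ a₂ a₃ = 0) (hb : cross b₁ b₂ b₃ = 0)
    (h₁₂ : cross a₁ b₂ c₁₂ = 0) (h₂₁ : cross a₂ b₁ c₁₂ = 0)
    (h₁₃ : cross a₁ b₃ c₁₃ = 0) (h₃₁ : cross a₃ b₁ c₁₃ = 0)
    (h₂₃ : cross a₂ b₃ c₂₃ = 0) (h₃₂ : cross a₃ b₂ c₂₃ = 0)
    (hab : cross a₁ a₂ b₁ ≠ 0) (hb₁₂ : b₁ ≠ b₂)
    (hw₁₂ : wedge (b₂ - a₁) (b₁ - a₂) ≠ 0) (hw₁₃ : wedge (b₃ - a₁) (b₁ - a₃) ≠ 0)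
    (hw₂₃ : wedge (b₃ - a₂) (b₂ - a₃) ≠ 0) :
    cross c₁₂ c₁₃ c₂₃ = 0 := by
  have ha₁₂ : a₁ ≠ a₂ := by
    rintro rfl
    simp [cross, wedge] at hab
  obtain ⟨l, rfl⟩ := exists_eq_add_smul_of_cross_eq_zero ha ha₁₂
  obtain ⟨m, rfl⟩ := exists_eq_add_smul_of_cross_eq_zero hb hb₁₂
  have hcross {p q r : K × K} (h : cross p q r = 0) :
      cross (frameCoords a₁ a₂ b₁ p) (frameCoords a₁ a₂ b₁ q) (frameCoords a₁ a₂ b₁ r) = 0 := by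
    rw [cross_frameCoords hab, h, zero_div]
  have hwedge {p q r s : K × K} (h : wedge (q - p) (s - r) ≠ 0) :
      wedge (frameCoords a₁ a₂ b₁ q - frameCoords a₁ a₂ b₁ p)
        (frameCoords a₁ a₂ b₁ s - frameCoords a₁ a₂ b₁ r) ≠ 0 := by
    rw [wedge_frameCoords_sub hab]
    exact div_ne_zero h hab
  have key := cross_eq_zero_of_pappus_normalized frameCoords_origin (frameCoords_left hab)
    (frameCoords_right hab) (frameCoords_add_smul_sub _ _ _) (frameCoords_add_smul_sub _ _ _)
    (hcross h₁₂) (hcross h₂₁) (hcross h₁₃) (hcross h₃₁) (hcross h₂₃) (hcross h₃₂)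
    (hwedge hw₁₂) (hwedge hw₁₃) (hwedge hw₂₃)
  rwa [cross_frameCoords hab, div_eq_zero_iff, or_iff_left hab] at key

end Coordinates

lemma IsLine.cross_eq_zero {L : Set Pt} (hL : IsLine L) {p q r : Pt} (hp : p ∈ L) (hq : q ∈ L)
    (hr : r ∈ L) : cross p q r = 0 := by
  obtain ⟨a, b, -, rfl⟩ := hL
  obtain ⟨s, rfl⟩ := mem_affineSpan_pair_iff_exists_lineMap_eq.mp hp
  obtain ⟨t, rfl⟩ := mem_affineSpan_pair_iff_exists_lineMap_eq.mp hq
  obtain ⟨u, rfl⟩ := mem_affineSpan_pair_iff_exists_lineMap_eq.mp hr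
  simp only [cross, wedge, AffineMap.lineMap_apply, vsub_eq_sub, vadd_eq_add, Prod.fst_add,
    Prod.snd_add, Prod.fst_sub, Prod.snd_sub, Prod.smul_fst, Prod.smul_snd, smul_eq_mul]
  ring

lemma IsLine.mem_of_cross_eq_zero {L : Set Pt} (hL : IsLine L) {p q r : Pt} (hp : p ∈ L)
    (hq : q ∈ L) (hpq : p ≠ q) (h : cross p q r = 0) : r ∈ L := by
  obtain ⟨a, b, -, rfl⟩ := hL
  obtain ⟨t, rfl⟩ := exists_eq_add_smul_of_cross_eq_zero h hpq
  have := AffineMap.lineMap_mem (k := ℝ) t hp hq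
  rwa [AffineMap.lineMap_apply, vsub_eq_sub, vadd_eq_add, add_comm] at this

namespace LineRep

variable {ι : Type} {H : FinHypergraph ι} (R : LineRep H) {e : Finset ι} {u v w : ι}

lemma α_mem_β (he : e ∈ H.E) (hu : u ∈ e) : R.α u ∈ R.β e :=
  (R.incidence u (H.edge_subset e he hu) e he).mp hu

lemma cross_eq_zero (he : e ∈ H.E) (hu : u ∈ e) (hv : v ∈ e) (hw : w ∈ e) :
    cross (R.α u) (R.α v) (R.α w) = 0 :=
  (R.β_isLine e he).cross_eq_zero (R.α_mem_β he hu) (R.α_mem_β he hv) (R.α_mem_β he hw)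

lemma cross_ne_zero (he : e ∈ H.E) (hu : u ∈ e) (hv : v ∈ e) (huv : u ≠ v) (hw : w ∈ H.V)
    (hwe : w ∉ e) : cross (R.α u) (R.α v) (R.α w) ≠ 0 := fun h =>
  hwe <| (R.incidence w hw e he).mpr <| (R.β_isLine e he).mem_of_cross_eq_zero
    (R.α_mem_β he hu) (R.α_mem_β he hv)
    (R.α_inj.ne (H.edge_subset e he hu) (H.edge_subset e he hv) huv) h

end LineRep

/-- The Pappus gadget on `p 0, …, p 8`, the paper's `p₁, …, p₉`. -/
def pappusGadget {ι : Type} [DecidableEq ι] (p : Fin 9 → ι) : Finset (Finset ι) :=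
  {{p 0, p 1, p 2}, {p 3, p 4, p 5}, {p 0, p 3, p 7}, {p 0, p 4, p 8},
    {p 1, p 3, p 6}, {p 1, p 5, p 8}, {p 2, p 4, p 6}, {p 2, p 5, p 7}}

theorem LineRep.cross_eq_zero_of_pappusGadget {ι : Type} [DecidableEq ι] {H : FinHypergraph ι}
    (R : LineRep H) {p : Fin 9 → ι} (hp : Function.Injective p) (hV : ∀ i, p i ∈ H.V)
    (hE : pappusGadget p ⊆ H.E) : cross (R.α (p 6)) (R.α (p 7)) (R.α (p 8)) = 0 := by
  have hon {i j k : Fin 9} (h : ∃ e ∈ pappusGadget p, p i ∈ e ∧ p j ∈ e ∧ p k ∈ e := by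
      simp [pappusGadget, hp.eq_iff]) : cross (R.α (p i)) (R.α (p j)) (R.α (p k)) = 0 := by
    obtain ⟨e, he, hi, hj, hk⟩ := h
    exact R.cross_eq_zero (hE he) hi hj hk
  have hoff {i j k : Fin 9} (h : ∃ e ∈ pappusGadget p, p i ∈ e ∧ p j ∈ e ∧ p k ∉ e := by
      simp [pappusGadget, hp.eq_iff]) (hij : i ≠ j := by decide) :
      cross (R.α (p i)) (R.α (p j)) (R.α (p k)) ≠ 0 := by
    obtain ⟨e, he, hi, hj, hk⟩ := h
    exact R.cross_ne_zero (hE he) hi hj (hp.ne hij) (hV k) hk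
  have hne {i j : Fin 9} (hij : i ≠ j := by decide) : R.α (p i) ≠ R.α (p j) :=
    R.α_inj.ne (hV i) (hV j) (hp.ne hij)
  exact cross_eq_zero_of_pappus (a₁ := R.α (p 2)) (a₂ := R.α (p 1)) (a₃ := R.α (p 0))
    (b₁ := R.α (p 3)) (b₂ := R.α (p 4)) (b₃ := R.α (p 5)) hon hon hon hon hon hon hon hon hoff hne
    (wedge_sub_ne_zero (c := R.α (p 6)) hon hon hne hoff)
    (wedge_sub_ne_zero (c := R.α (p 7)) hon hon hne hoff)
    (wedge_sub_ne_zero (c := R.α (p 8)) hon hon hne hoff)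

theorem stmt16 : ¬ Nonempty (LineRep twoPappus) := by
  rintro ⟨R⟩
  have hp : Function.Injective (Fin.castLE (by norm_num) : Fin 9 → Fin 18) :=
    Fin.castLE_injective _
  have h := R.cross_eq_zero_of_pappusGadget hp (fun _ => Finset.mem_univ _) (by decide)
  rw [cross_rotate] at h
  exact R.cross_ne_zero (e := {15, 7, 8}) (by decide) (by decide) (by decide) (by decide)
    (Finset.mem_univ 6) (by decide) h
end
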